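/- arXiv:1901.08261 — 5 statements merged into one kernel-verified Lean document; each statement's English description precedes it below -/
import Mathlib

section
/- Let n ≥ 2 and let E ⊆ ℝ^{n+1} be a closed set. Then there exists a constant C ≥ 1, depending only on n, such that for each k ∈ ℤ there is a collection 𝔻_k = {Q_j^k ⊆ E : j ∈ J_k} of Borel subsets of E (where J_k is a possibly finite index set) satisfying: (a) E = ⋃_{j ∈ J_k} Q_j^k for each k ∈ ℤ, and for each fixed k the sets Q_j^k are pairwise disjoint; (b) if m ≤ k then either Q_j^k ⊆ Q_i^m or Q_i^m ∩ Q_j^k = ∅; (c) for each k ∈ ℤ, j ∈ J_k, and m < k, there is a unique i ∈ J_m such that Q_j^k ⊆ Q_i^m; (d) for each k ∈ ℤ and j ∈ J_k there is a point x_j^k ∈ E such that B(x_j^k, C^{-1} 2^{-k}) ∩ E ⊆ Q_j^k ⊆ B(x_j^k, C 2^{-k}) ∩ E. -/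
/-!
Christ's construction, carried out in any proper metric space. For each `k ∈ ℤ` fix a maximal
`8^{-k}`-separated set; sending each point to its nearest point of the `k`-th net makes the union
of the nets a tree. Every point `z` is given a branch of this tree whose level-`k` vertex lies
within `2·8^{-k}` of `z`: finite branches of every depth exist, and since the candidates at each
level are finitely many, König's lemma lets us choose the branch level by level, always taking the
first admissible child in a fixed enumeration so that the choice is Borel in `z`. The cube of a net
point `x` of level `k` is the set of points whose branch passes through `x`. Cubes are nested
because branches are, and the `8^{-k}/4`-ball around `x` lies in its cube because the nearest
point map is forced at that distance. Closed subsets of `ℝ^{n+1}` are proper metric spaces.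
-/

open Set Metric Delone
open scoped NNReal

noncomputable section

namespace Delone.DeloneSet

variable {X : Type*} [MetricSpace X]

theorem exists_radii_eq (ε : ℝ≥0) (hε : 0 < ε) :
    ∃ D : DeloneSet X, D.packingRadius = ε ∧ D.coveringRadius = ε := by
  obtain ⟨N, hN⟩ := zorn_subset {N : Set X | N ⊆ univ ∧ IsSeparated ε N} fun c hcS hc =>
    ⟨⋃₀ c, ⟨subset_univ _, hc.pairwise_sUnion.2 fun s hs => (hcS hs).2⟩,
      fun _ => subset_sUnion_of_mem⟩
  exact ⟨⟨N, ε, hε, hN.prop.2, ε, hε, IsCover.of_maximal_isSeparated hN⟩, rfl, rfl⟩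

theorem subsingleton_inter_ball (D : DeloneSet X) (z : X) :
    ((D : Set X) ∩ ball z (D.packingRadius / 2)).Subsingleton :=
  fun _ hx _ hy => D.eq_of_mem_ball le_rfl hx.1 hy.1 hx.2 hy.2

theorem countable [TopologicalSpace.SeparableSpace X] (D : DeloneSet X) : (D : Set X).Countable :=
  PairwiseDisjoint.countable_of_isOpen (s := fun x => ball x (D.packingRadius / 2))
    (fun x hx y hy hxy => disjoint_left.2 fun z hzx hzy =>
      hxy (D.subsingleton_inter_ball z ⟨hx, mem_ball_comm.1 hzx⟩ ⟨hy, mem_ball_comm.1 hzy⟩))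
    (fun _ _ => isOpen_ball) fun x _ => ⟨x, mem_ball_self (by simpa using D.packingRadius_pos)⟩

theorem finite_inter_of_totallyBounded (D : DeloneSet X) {K : Set X} (hK : TotallyBounded K) :
    ((D : Set X) ∩ K).Finite := by
  obtain ⟨t, ht, hKt⟩ :=
    Metric.totallyBounded_iff.1 hK (D.packingRadius / 2) (by simpa using D.packingRadius_pos)
  refine (ht.biUnion fun z _ => (D.subsingleton_inter_ball z).finite).subset ?_
  rintro x ⟨hxD, hxK⟩
  obtain ⟨z, hz, hxz⟩ := mem_iUnion₂.1 (hKt hxK)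
  exact mem_iUnion₂.2 ⟨z, hz, hxD, hxz⟩

variable [ProperSpace X]

theorem exists_nearest (D : DeloneSet X) (w : X) :
    ∃ x ∈ D, ∀ y ∈ D, dist w x ≤ dist w y := by
  obtain ⟨x₀, hx₀, hwx₀⟩ := D.exists_dist_le_coveringRadius w
  obtain ⟨x, ⟨hx, hxw⟩, hmin⟩ := Set.exists_min_image _ (dist w)
    (D.finite_inter_of_totallyBounded (isCompact_closedBall w D.coveringRadius).totallyBounded)
    ⟨x₀, hx₀, mem_closedBall_comm.1 hwx₀⟩
  refine ⟨x, hx, fun y hy => ?_⟩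
  by_cases hyw : y ∈ closedBall w D.coveringRadius
  · exact hmin y ⟨hy, hyw⟩
  · rw [mem_closedBall, dist_comm] at hxw
    exact hxw.trans (not_le.1 (by rwa [mem_closedBall, dist_comm] at hyw)).le

def nearest (D : DeloneSet X) (w : X) : X := (D.exists_nearest w).choose

theorem nearest_mem (D : DeloneSet X) (w : X) : D.nearest w ∈ D :=
  (D.exists_nearest w).choose_spec.1

theorem dist_nearest_le (D : DeloneSet X) (w : X) : dist w (D.nearest w) ≤ D.coveringRadius := by
  obtain ⟨x, hx, hwx⟩ := D.exists_dist_le_coveringRadius w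
  exact ((D.exists_nearest w).choose_spec.2 x hx).trans hwx

theorem nearest_eq_of_dist_lt (D : DeloneSet X) {w x : X} (hx : x ∈ D)
    (hwx : dist w x < D.packingRadius / 2) : D.nearest w = x :=
  D.subsingleton_inter_ball w
    ⟨D.nearest_mem w, mem_ball_comm.1 (((D.exists_nearest w).choose_spec.2 x hx).trans_lt hwx)⟩
    ⟨hx, mem_ball_comm.1 hwx⟩

end Delone.DeloneSet

section DyadicSystem

variable {X : Type*} [PseudoMetricSpace X] [MeasurableSpace X]

structure IsDyadicSystem (E : Set X) (𝔻 : ℤ → Set (Set X)) (r R : ℤ → ℝ) : Prop where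
  countable (k : ℤ) : (𝔻 k).Countable
  measurableSet_subset (k : ℤ) : ∀ Q ∈ 𝔻 k, MeasurableSet Q ∧ Q ⊆ E
  sUnion_eq (k : ℤ) : ⋃₀ 𝔻 k = E
  pairwiseDisjoint (k : ℤ) : (𝔻 k).PairwiseDisjoint id
  subset_or_inter_eq_empty (k m : ℤ) :
    m ≤ k → ∀ Q ∈ 𝔻 k, ∀ Q' ∈ 𝔻 m, Q ⊆ Q' ∨ Q' ∩ Q = ∅
  existsUnique_superset (k m : ℤ) :
    m ≤ k → ∀ Q ∈ 𝔻 k, ∃! Q', Q' ∈ 𝔻 m ∧ Q ⊆ Q'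
  exists_ball (k : ℤ) :
    ∀ Q ∈ 𝔻 k, ∃ x ∈ E, ball x (r k) ∩ E ⊆ Q ∧ Q ⊆ ball x (R k) ∩ E

namespace IsDyadicSystem

variable {E : Set X} {𝔻 : ℤ → Set (Set X)} {r R : ℤ → ℝ}

theorem comp_monotone (h : IsDyadicSystem E 𝔻 r R) {f : ℤ → ℤ} (hf : Monotone f) :
    IsDyadicSystem E (𝔻 ∘ f) (r ∘ f) (R ∘ f) where
  countable k := h.countable (f k)
  measurableSet_subset k := h.measurableSet_subset (f k)
  sUnion_eq k := h.sUnion_eq (f k)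
  pairwiseDisjoint k := h.pairwiseDisjoint (f k)
  subset_or_inter_eq_empty k m hmk := h.subset_or_inter_eq_empty (f k) (f m) (hf hmk)
  existsUnique_superset k m hmk := h.existsUnique_superset (f k) (f m) (hf hmk)
  exists_ball k := h.exists_ball (f k)

theorem mono_radii (h : IsDyadicSystem E 𝔻 r R) {r' R' : ℤ → ℝ} (hr : ∀ k, r' k ≤ r k)
    (hR : ∀ k, R k ≤ R' k) : IsDyadicSystem E 𝔻 r' R' where
  __ := h
  exists_ball k Q hQ :=
    let ⟨x, hx, hin, hout⟩ := h.exists_ball k Q hQ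
    ⟨x, hx, (inter_subset_inter_left _ (ball_subset_ball (hr k))).trans hin,
      hout.trans (inter_subset_inter_left _ (ball_subset_ball (hR k)))⟩

theorem empty (r R : ℤ → ℝ) : IsDyadicSystem (∅ : Set X) (fun _ => ∅) r R where
  countable _ := countable_empty
  measurableSet_subset _ := by simp
  sUnion_eq _ := sUnion_empty
  pairwiseDisjoint _ := pairwiseDisjoint_empty
  subset_or_inter_eq_empty _ _ _ := by simp
  existsUnique_superset _ _ _ := by simp
  exists_ball _ := by simp

theorem image_val (hE : MeasurableSet E) {𝔻 : ℤ → Set (Set E)}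
    (h : IsDyadicSystem (univ : Set E) 𝔻 r R) :
    IsDyadicSystem E (fun k => image (↑) '' 𝔻 k) r R where
  countable k := (h.countable k).image _
  measurableSet_subset k := by
    rintro _ ⟨Q, hQ, rfl⟩
    exact ⟨hE.subtype_image (h.measurableSet_subset k Q hQ).1, Subtype.coe_image_subset E Q⟩
  sUnion_eq k := by
    rw [sUnion_image, ← image_iUnion₂, ← sUnion_eq_biUnion, h.sUnion_eq, image_univ,
      Subtype.range_coe]
  pairwiseDisjoint k := by
    rintro _ ⟨Q, hQ, rfl⟩ _ ⟨Q', hQ', rfl⟩ hne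
    exact (disjoint_image_iff Subtype.val_injective).2
      (h.pairwiseDisjoint k hQ hQ' (ne_of_apply_ne _ hne))
  subset_or_inter_eq_empty k m hmk := by
    rintro _ ⟨Q, hQ, rfl⟩ _ ⟨Q', hQ', rfl⟩
    rw [image_subset_image_iff Subtype.val_injective, ← image_inter Subtype.val_injective,
      image_eq_empty]
    exact h.subset_or_inter_eq_empty k m hmk Q hQ Q' hQ'
  existsUnique_superset k m hmk := by
    rintro _ ⟨Q, hQ, rfl⟩
    obtain ⟨Q', ⟨hQ', hQQ'⟩, huniq⟩ := h.existsUnique_superset k m hmk Q hQ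
    refine ⟨_, ⟨mem_image_of_mem _ hQ', image_mono hQQ'⟩, ?_⟩
    rintro _ ⟨⟨P, hP, rfl⟩, hQP⟩
    rw [huniq P ⟨hP, (image_subset_image_iff Subtype.val_injective).1 hQP⟩]
  exists_ball k := by
    rintro _ ⟨Q, hQ, rfl⟩
    obtain ⟨x, -, hin, hout⟩ := h.exists_ball k Q hQ
    refine ⟨x, x.2, fun y ⟨hyx, hyE⟩ => ⟨⟨y, hyE⟩, hin ⟨hyx, trivial⟩, rfl⟩, ?_⟩
    rintro _ ⟨y, hyQ, rfl⟩
    exact ⟨(hout hyQ).1, y.2⟩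

end IsDyadicSystem

variable [MeasurableSingletonClass X]

theorem isDyadicSystem_univ_of_branch {N : ℤ → Set X} {b : ℤ → X → X} {r R : ℤ → ℝ}
    (hN : ∀ k, (N k).Countable) (hb_mem : ∀ k z, b k z ∈ N k) (hb : ∀ k, Measurable (b k))
    (hb_factor : ∀ {m k}, m ≤ k → ∀ z z', b k z = b k z' → b m z = b m z')
    (hr : ∀ k, 0 < r k)
    (hb_ball : ∀ k, ∀ x ∈ N k, ∀ z, dist z x < r k → b k z = x)
    (hb_dist : ∀ k z, dist z (b k z) < R k) :
    IsDyadicSystem univ (fun k => (fun x => b k ⁻¹' {x}) '' N k) r R := by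
  have hb_self : ∀ k, ∀ x ∈ N k, b k x = x := fun k x hx =>
    hb_ball k x hx x (by simpa using hr k)
  have hb_cube : ∀ {m k}, m ≤ k → ∀ x ∈ N k, ∀ z, b k z = x → b m z = b m x :=
    fun hmk x hx z hz => hb_factor hmk z x (hz.trans (hb_self _ x hx).symm)
  refine ⟨fun k => (hN k).image _, ?_, fun k => ?_, fun k => ?_, ?_, ?_, ?_⟩
  · rintro k _ ⟨x, -, rfl⟩
    exact ⟨hb k (measurableSet_singleton x), subset_univ _⟩
  · exact eq_univ_of_forall fun z => ⟨_, ⟨b k z, hb_mem k z, rfl⟩, rfl⟩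
  · rintro _ ⟨x, hx, rfl⟩ _ ⟨x', hx', rfl⟩ hne
    exact pairwiseDisjoint_fiber (b k) (N k) hx hx' fun h => hne (h ▸ rfl)
  · rintro k m hmk _ ⟨x, hx, rfl⟩ _ ⟨x', -, rfl⟩
    by_cases hxx' : b m x = x'
    · exact .inl fun z hz => hxx' ▸ hb_cube hmk x hx z hz
    · exact .inr (eq_empty_of_forall_notMem fun z ⟨hz', hz⟩ =>
        hxx' ((hb_cube hmk x hx z hz).symm.trans hz'))
  · rintro k m hmk _ ⟨x, hx, rfl⟩
    refine ⟨b m ⁻¹' {b m x}, ⟨⟨b m x, hb_mem m x, rfl⟩, hb_cube hmk x hx⟩, ?_⟩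
    rintro _ ⟨⟨y, -, rfl⟩, hxy⟩
    rw [show y = b m x from (hxy (hb_self k x hx)).symm]
  · rintro k _ ⟨x, hx, rfl⟩
    exact ⟨x, trivial, fun z hz => hb_ball k x hx z hz.1, fun z hz =>
      ⟨by simpa [show b k z = x from hz] using hb_dist k z, trivial⟩⟩

end DyadicSystem

namespace DyadicCubes

variable {X : Type*} [MetricSpace X]

def scale (k : ℤ) : ℝ := 8 ^ (-k)

theorem scale_pos (k : ℤ) : 0 < scale k := by unfold scale; positivity

theorem scale_succ (k : ℤ) : scale (k + 1) = scale k / 8 := by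
  rw [scale, scale, neg_add, zpow_add₀ (by norm_num), zpow_neg_one, div_eq_mul_inv]

variable (X) in
def net (k : ℤ) : DeloneSet X :=
  (DeloneSet.exists_radii_eq (scale k).toNNReal (Real.toNNReal_pos.2 (scale_pos k))).choose

theorem net_radii (k : ℤ) :
    (net X k).packingRadius = (scale k).toNNReal ∧
      (net X k).coveringRadius = (scale k).toNNReal :=
  (DeloneSet.exists_radii_eq _ (Real.toNNReal_pos.2 (scale_pos k))).choose_spec

theorem net_packingRadius (k : ℤ) : ((net X k).packingRadius : ℝ) = scale k := by
  rw [(net_radii k).1, Real.coe_toNNReal _ (scale_pos k).le]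

theorem net_coveringRadius (k : ℤ) : ((net X k).coveringRadius : ℝ) = scale k := by
  rw [(net_radii k).2, Real.coe_toNNReal _ (scale_pos k).le]

variable [ProperSpace X]

/-- Defined on all of `X`; on the `(k+1)`-st net it is the parent map of the tree. -/
def parent (k : ℤ) (w : X) : X := (net X k).nearest w

theorem parent_mem (k : ℤ) (w : X) : parent k w ∈ net X k := DeloneSet.nearest_mem _ w

theorem dist_parent_le (k : ℤ) (w : X) : dist w (parent k w) ≤ scale k :=
  net_coveringRadius (X := X) k ▸ DeloneSet.dist_nearest_le _ w

theorem parent_eq_of_dist_lt {k : ℤ} {w x : X} (hx : x ∈ net X k)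
    (hwx : dist w x < scale k / 2) : parent k w = x :=
  DeloneSet.nearest_eq_of_dist_lt _ hx (by rwa [net_packingRadius])

/-- `ancestor m n w` climbs `n` generations, from level `m + n` to level `m`. -/
def ancestor (m : ℤ) : ℕ → X → X
  | 0, w => w
  | n + 1, w => ancestor m n (parent (m + n) w)

@[simp]
theorem ancestor_zero (m : ℤ) (w : X) : ancestor m 0 w = w := rfl

theorem ancestor_add (m : ℤ) (a b : ℕ) (w : X) :
    ancestor m (a + b) w = ancestor m a (ancestor (m + a) b w) := by
  induction b generalizing w with
  | zero => rfl
  | succ b ih =>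
    rw [← add_assoc, ancestor, ih, ancestor, Nat.cast_add, add_assoc]

theorem ancestor_succ' (m : ℤ) (n : ℕ) (w : X) :
    ancestor m (n + 1) w = parent m (ancestor (m + 1) n w) := by
  rw [add_comm n, ancestor_add]
  simp [ancestor]

theorem ancestor_mem {m : ℤ} {n : ℕ} {v : X} (hv : v ∈ net X (m + n)) :
    ancestor m n v ∈ net X m := by
  cases n with
  | zero => simpa using hv
  | succ n => exact ancestor_succ' m n v ▸ parent_mem m _

theorem dist_ancestor_le (m : ℤ) (n : ℕ) (w : X) :
    dist w (ancestor m n w) ≤ 2 * scale m - 2 * scale (m + n) := by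
  induction n generalizing m with
  | zero => simp
  | succ n ih =>
    rw [ancestor_succ', show m + ((n + 1 : ℕ) : ℤ) = m + 1 + n by push_cast; ring]
    have h := ih (m + 1)
    rw [scale_succ] at h
    set u := ancestor (m + 1) n w
    linarith [scale_pos m, dist_triangle w u (parent m u), dist_parent_le m u]

def AncestorsNear (z : X) (j : ℤ) (v : X) : Prop :=
  v ∈ net X j ∧ ∀ n : ℕ, dist z (ancestor (j - n) n v) ≤ 2 * scale (j - n)

theorem AncestorsNear.ancestor {z v : X} {m : ℤ} {n : ℕ} (h : AncestorsNear z (m + n) v) :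
    AncestorsNear z m (ancestor m n v) := by
  refine ⟨ancestor_mem h.1, fun i => ?_⟩
  have hi := h.2 (i + n)
  rwa [show m + n - ((i + n : ℕ) : ℤ) = m - i by push_cast; ring, ancestor_add,
    sub_add_cancel] at hi

theorem AncestorsNear.dist_le {z v : X} {j : ℤ} (h : AncestorsNear z j v) :
    dist z v ≤ 2 * scale j := by
  simpa using h.2 0

theorem ancestorsNear_parent (z : X) (j : ℤ) : AncestorsNear z j (parent j z) := by
  refine ⟨parent_mem j z, fun n => ?_⟩
  have h := dist_ancestor_le (j - n) n (parent j z)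
  rw [sub_add_cancel] at h
  linarith [scale_pos j, dist_triangle z (parent j z) (ancestor (j - n) n (parent j z)),
    dist_parent_le j z]

theorem finite_setOf_ancestorsNear (z : X) (j : ℤ) : {v | AncestorsNear z j v}.Finite :=
  ((net X j).finite_inter_of_totallyBounded (isCompact_closedBall z _).totallyBounded).subset
    fun _ hv => ⟨hv.1, mem_closedBall_comm.1 hv.dist_le⟩

def HasNearDescendants (z : X) (t : ℤ) (w : X) : Prop :=
  ∀ n : ℕ, ∃ v, AncestorsNear z (t + n) v ∧ ancestor t n v = w

/-- König's lemma: the ancestors at level `t` range over a finite set, so one of them serves every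
depth. -/
theorem exists_hasNearDescendants_of_forall {z : X} {t : ℤ} {P : X → Prop}
    (h : ∀ n : ℕ, ∃ v, AncestorsNear z (t + n) v ∧ P (ancestor t n v)) :
    ∃ w ∈ net X t, P w ∧ HasNearDescendants z t w := by
  set S : ℕ → Set X := fun n =>
    ancestor t n '' {v | AncestorsNear z (t + n) v ∧ P (ancestor t n v)}
  have hfin : ∀ n, (S n).Finite := fun n =>
    (finite_setOf_ancestorsNear z t).subset (image_subset_iff.2 fun v hv => hv.1.ancestor)
  have hanti : ∀ n, S (n + 1) ⊆ S n := by
    rintro n _ ⟨v, ⟨hv, hP⟩, rfl⟩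
    refine ⟨ancestor (t + n) 1 v, ⟨?_, ?_⟩, ?_⟩
    · exact AncestorsNear.ancestor (by rwa [add_assoc, ← Nat.cast_one, ← Nat.cast_add])
    · rwa [← ancestor_add]
    · rw [← ancestor_add]
  obtain ⟨w, hw⟩ := IsCompact.nonempty_iInter_of_sequence_nonempty_isCompact_isClosed S hanti
    (fun n => let ⟨v, hv⟩ := h n; ⟨_, v, hv, rfl⟩) (hfin 0).isCompact
    fun n => (hfin n).isClosed
  have hwS : ∀ n, w ∈ S n := mem_iInter.1 hw
  obtain ⟨v, ⟨hv, hP⟩, rfl⟩ := hwS 0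
  exact ⟨_, hv.ancestor.1, hP, fun n =>
    let ⟨v, ⟨hv, _⟩, hvw⟩ := hwS n
    ⟨v, hv, hvw⟩⟩

theorem exists_hasNearDescendants (z : X) (t : ℤ) : ∃ w ∈ net X t, HasNearDescendants z t w :=
  (exists_hasNearDescendants_of_forall (P := fun _ => True) fun n =>
    ⟨_, ancestorsNear_parent z (t + n), trivial⟩).imp fun _ ⟨hw, _, h⟩ => ⟨hw, h⟩

theorem HasNearDescendants.ancestorsNear {z w : X} {t : ℤ} (h : HasNearDescendants z t w) :
    AncestorsNear z t w := by
  obtain ⟨v, hv, rfl⟩ := h 0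
  simpa using hv

theorem HasNearDescendants.exists_child {z w : X} {t : ℤ} (h : HasNearDescendants z t w) :
    ∃ w' ∈ net X (t + 1), parent t w' = w ∧ HasNearDescendants z (t + 1) w' := by
  refine exists_hasNearDescendants_of_forall fun n => ?_
  obtain ⟨v, hv, hvw⟩ := h (n + 1)
  refine ⟨v, by rwa [add_assoc, add_comm 1], ?_⟩
  rwa [← ancestor_succ']

theorem isClosed_setOf_ancestorsNear (j : ℤ) (v : X) : IsClosed {z | AncestorsNear z j v} := by
  simp only [AncestorsNear, ofPred_and, ofPred_forall]
  exact isClosed_const.inter (isClosed_iInter fun n => isClosed_le (by fun_prop) continuous_const)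

theorem measurableSet_setOf_hasNearDescendants [MeasurableSpace X] [BorelSpace X] (t : ℤ)
    (w : X) : MeasurableSet {z | HasNearDescendants z t w} := by
  have h : {z | HasNearDescendants z t w} = ⋂ n : ℕ,
      ⋃ v ∈ (net X (t + n) : Set X) ∩ {v | ancestor t n v = w},
        {z | AncestorsNear z (t + n) v} := by
    ext z
    simp only [HasNearDescendants, mem_ofPred_eq, mem_iInter, mem_iUnion, mem_inter_iff,
      exists_prop]
    exact forall_congr' fun n => exists_congr fun v => ⟨fun h => ⟨⟨h.1.1, h.2⟩, h.1⟩,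
      fun h => ⟨h.2, h.1.2⟩⟩
  rw [h]
  exact .iInter fun n => .biUnion ((net X _).countable.mono inter_subset_left) fun v _ =>
    (isClosed_setOf_ancestorsNear _ v).measurableSet

section Branch

variable [Nonempty X]

def netEnum (k : ℤ) : ℕ → X :=
  (countable_iff_exists_subset_range.1 (net X k).countable).choose

theorem net_subset_range_netEnum (k : ℤ) : (net X k : Set X) ⊆ range (netEnum k) :=
  (countable_iff_exists_subset_range.1 (net X k).countable).choose_spec

def firstIndex (k : ℤ) (p : X → Prop) : ℕ := sInf {i | p (netEnum k i)}

theorem firstIndex_spec {k : ℤ} {p : X → Prop} (h : ∃ x ∈ net X k, p x) :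
    p (netEnum k (firstIndex k p)) := by
  obtain ⟨x, hx, hpx⟩ := h
  obtain ⟨i, rfl⟩ := net_subset_range_netEnum k hx
  exact Nat.sInf_mem (s := {i | p (netEnum k i)}) ⟨i, hpx⟩

theorem measurable_firstIndex {α : Type*} [MeasurableSpace α] {k : ℤ} {p : α → X → Prop}
    (hp : ∀ a, ∃ x ∈ net X k, p a x) (hm : ∀ x, MeasurableSet {a | p a x}) :
    Measurable fun a => firstIndex k (p a) := by
  classical
  have hp' : ∀ a, ∃ i, p a (netEnum k i) := fun a =>
    let ⟨x, hx, hpx⟩ := hp a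
    let ⟨i, hi⟩ := net_subset_range_netEnum k hx
    ⟨i, hi ▸ hpx⟩
  convert measurable_find hp' fun i => hm (netEnum k i) using 2 with a
  exact Nat.sInf_def (hp' a)

/-- The branch through `z` at the levels `t ≥ 0`, chosen through indices so that it is measurable
in `z`. -/
def descentIndex : ℕ → X → ℕ
  | 0, z => firstIndex 0 (HasNearDescendants z 0)
  | t + 1, z => firstIndex (t + 1) fun w =>
      parent t w = netEnum t (descentIndex t z) ∧ HasNearDescendants z (t + 1) w

def descent (t : ℕ) (z : X) : X := netEnum t (descentIndex t z)

theorem descent_succ_spec (t : ℕ) (z : X) (h : HasNearDescendants z t (descent t z)) :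
    parent t (descent (t + 1) z) = descent t z ∧
      HasNearDescendants z (t + 1) (descent (t + 1) z) :=
  firstIndex_spec h.exists_child

theorem hasNearDescendants_descent (z : X) : ∀ t : ℕ, HasNearDescendants z t (descent t z)
  | 0 => firstIndex_spec (exists_hasNearDescendants z 0)
  | t + 1 => by
    simpa using (descent_succ_spec t z (hasNearDescendants_descent z t)).2

theorem parent_descent_succ (t : ℕ) (z : X) : parent t (descent (t + 1) z) = descent t z :=
  (descent_succ_spec t z (hasNearDescendants_descent z t)).1

theorem measurable_descentIndex [MeasurableSpace X] [BorelSpace X] :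
    ∀ t : ℕ, Measurable (descentIndex (X := X) t)
  | 0 => measurable_firstIndex (exists_hasNearDescendants · 0)
      (measurableSet_setOf_hasNearDescendants 0)
  | t + 1 => measurable_firstIndex (hasNearDescendants_descent · t |>.exists_child) fun w =>
      (measurable_descentIndex t (.of_discrete (s := {i | parent t w = netEnum t i}))).inter
        (measurableSet_setOf_hasNearDescendants (t + 1) w)

/-- Below level `0` the branch through `z` is the line of ancestors of `descent 0 z`. -/
def branch (k : ℤ) (z : X) : X := ancestor k (-k).toNat (descent k.toNat z)

theorem ancestorsNear_branch (k : ℤ) (z : X) : AncestorsNear z k (branch k z) :=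
  AncestorsNear.ancestor <| by
    rw [show k + (-k).toNat = k.toNat by omega]
    exact (hasNearDescendants_descent z _).ancestorsNear

theorem parent_branch_succ (k : ℤ) (z : X) : parent k (branch (k + 1) z) = branch k z := by
  rcases le_or_gt 0 k with hk | hk
  · lift k to ℕ using hk
    simp only [branch, show (-((k : ℤ) + 1)).toNat = 0 by omega,
      show (-(k : ℤ)).toNat = 0 by omega, show ((k : ℤ) + 1).toNat = k + 1 by omega,
      Int.toNat_natCast, ancestor_zero]
    exact parent_descent_succ k z
  · rw [branch, branch, show (-k).toNat = (-(k + 1)).toNat + 1 by omega, ancestor_succ',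
      show (k + 1).toNat = k.toNat by omega]

theorem ancestor_branch (m : ℤ) (n : ℕ) (z : X) :
    ancestor m n (branch (m + n) z) = branch m z := by
  induction n with
  | zero => simp
  | succ n ih => rw [ancestor, Nat.cast_succ, ← add_assoc, parent_branch_succ, ih]

theorem branch_eq_of_branch_eq {m k : ℤ} (hmk : m ≤ k) {z z' : X}
    (h : branch k z = branch k z') : branch m z = branch m z' := by
  obtain ⟨n, rfl⟩ : ∃ n : ℕ, k = m + n := ⟨(k - m).toNat, by omega⟩
  rw [← ancestor_branch, h, ancestor_branch]

theorem branch_eq_of_dist_lt {k : ℤ} {x z : X} (hx : x ∈ net X k)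
    (hzx : dist z x < scale k / 4) : branch k z = x := by
  rw [← parent_branch_succ]
  refine parent_eq_of_dist_lt hx ?_
  have h := (ancestorsNear_branch (k + 1) z).dist_le
  rw [scale_succ] at h
  linarith [dist_triangle_left (branch (k + 1) z) x z]

theorem measurable_branch [MeasurableSpace X] [BorelSpace X] (k : ℤ) :
    Measurable (branch (X := X) k) :=
  (measurable_from_nat (f := fun i => ancestor k (-k).toNat (netEnum k.toNat i))).comp
    (measurable_descentIndex k.toNat)

theorem isDyadicSystem_univ [MeasurableSpace X] [BorelSpace X] :
    IsDyadicSystem (univ : Set X) (fun k => (fun x => branch k ⁻¹' {x}) '' net X k)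
      (fun k => scale k / 4) (fun k => 4 * scale k) :=
  isDyadicSystem_univ_of_branch (fun k => (net X k).countable)
    (fun k z => (ancestorsNear_branch k z).1) measurable_branch branch_eq_of_branch_eq
    (fun k => by linarith [scale_pos k]) (fun _ _ hx _ => branch_eq_of_dist_lt hx)
    fun k z => (ancestorsNear_branch k z).dist_le.trans_lt (by linarith [scale_pos k])

end Branch

theorem exists_isDyadicSystem_of_isClosed {Y : Type*} [MetricSpace Y] [ProperSpace Y]
    [MeasurableSpace Y] [BorelSpace Y] {E : Set Y} (hE : IsClosed E) :
    ∃ 𝔻, IsDyadicSystem E 𝔻 (fun k => scale k / 4) (fun k => 4 * scale k) := by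
  rcases E.eq_empty_or_nonempty with rfl | ⟨x, hx⟩
  · exact ⟨_, .empty _ _⟩
  · have : Nonempty E := ⟨⟨x, hx⟩⟩
    have : ProperSpace E := .of_isClosed hE
    exact ⟨_, isDyadicSystem_univ.image_val hE.measurableSet⟩

theorem scale_eq_two_zpow (k : ℤ) : scale k = 2 ^ (-(3 * k)) := by
  rw [scale, show (8 : ℝ) = 2 ^ (3 : ℤ) by norm_num, ← zpow_mul]
  ring_nf

theorem inv_sixteen_mul_two_zpow_le (k : ℤ) : 16⁻¹ * 2 ^ (-k) ≤ scale ((k + 2) / 3) / 4 := by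
  rw [scale_eq_two_zpow, show (16⁻¹ : ℝ) = 2 ^ (-2 : ℤ) * 4⁻¹ by norm_num, mul_right_comm,
    ← zpow_add₀ two_ne_zero, ← div_eq_mul_inv]
  gcongr
  · exact one_le_two
  · omega

theorem four_mul_scale_le (k : ℤ) : 4 * scale ((k + 2) / 3) ≤ 16 * 2 ^ (-k) := by
  rw [scale_eq_two_zpow]
  gcongr
  · norm_num
  · exact one_le_two
  · omega

end DyadicCubes

theorem dyadic_grid_existence_general (n : ℕ) :
    ∃ C : ℝ, 1 ≤ C ∧
      ∀ E : Set (EuclideanSpace ℝ (Fin (n + 1))), IsClosed E →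
        ∃ 𝔻 : ℤ → Set (Set (EuclideanSpace ℝ (Fin (n + 1)))),
          (∀ k : ℤ, (𝔻 k).Countable) ∧
          (∀ k : ℤ, ∀ Q ∈ 𝔻 k, MeasurableSet Q ∧ Q ⊆ E) ∧
          -- (a) each generation covers `E` and consists of pairwise disjoint cubes
          (∀ k : ℤ, ⋃₀ 𝔻 k = E) ∧
          (∀ k : ℤ, (𝔻 k).PairwiseDisjoint id) ∧
          -- (b) nesting
          (∀ k m : ℤ, m ≤ k → ∀ Q ∈ 𝔻 k, ∀ Q' ∈ 𝔻 m, Q ⊆ Q' ∨ Q' ∩ Q = ∅) ∧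
          -- (c) unique ancestors
          (∀ k m : ℤ, m < k → ∀ Q ∈ 𝔻 k, ∃! Q', Q' ∈ 𝔻 m ∧ Q ⊆ Q') ∧
          -- (d) cubes are comparable to surface balls
          (∀ k : ℤ, ∀ Q ∈ 𝔻 k, ∃ x ∈ E,
            ball x (C⁻¹ * 2 ^ (-k)) ∩ E ⊆ Q ∧ Q ⊆ ball x (C * 2 ^ (-k)) ∩ E) := by
  refine ⟨16, by norm_num, fun E hE => ?_⟩
  obtain ⟨𝔻, h𝔻⟩ := DyadicCubes.exists_isDyadicSystem_of_isClosed hE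
  -- generation `k` of the grid is generation `⌈k / 3⌉` of the `8`-adic system
  have hceil : Monotone fun k : ℤ => (k + 2) / 3 := fun m k hmk => by dsimp only; omega
  have h := (h𝔻.comp_monotone hceil).mono_radii DyadicCubes.inv_sixteen_mul_two_zpow_le
    DyadicCubes.four_mul_scale_le
  exact ⟨_, h.countable, h.measurableSet_subset, h.sUnion_eq, h.pairwiseDisjoint,
    h.subset_or_inter_eq_empty, fun k m hmk => h.existsUnique_superset k m hmk.le, h.exists_ball⟩

/-- **Existence of a dyadic grid on a closed subset of `ℝ^{n+1}`** (Lemma 2.11 /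
`lemma:dyadiccubes` of the paper).  For `n ≥ 2` and `E ⊆ ℝ^{n+1}` closed, there is a
constant `C ≥ 1`, depending only on `n`, such that for each `k ∈ ℤ` there is a
collection `𝔻 k` of Borel subsets of `E` ("cubes") satisfying:
(a) for each `k`, `E` is the disjoint union of the cubes of `𝔻 k`;
(b) if `m ≤ k`, `Q ∈ 𝔻 k` and `Q' ∈ 𝔻 m`, then `Q ⊆ Q'` or `Q' ∩ Q = ∅`;
(c) for each `k`, `Q ∈ 𝔻 k` and `m < k` there is a unique `Q' ∈ 𝔻 m` with `Q ⊆ Q'`;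
(d) each `Q ∈ 𝔻 k` contains `B(x,C⁻¹2^{-k}) ∩ E` and is contained in
    `B(x,C·2^{-k}) ∩ E` for some `x ∈ E`. -/
theorem dyadic_grid_existence (n : ℕ) (hn : 2 ≤ n) :
    ∃ C : ℝ, 1 ≤ C ∧
      ∀ E : Set (EuclideanSpace ℝ (Fin (n + 1))), IsClosed E →
        ∃ 𝔻 : ℤ → Set (Set (EuclideanSpace ℝ (Fin (n + 1)))),
          (∀ k : ℤ, (𝔻 k).Countable) ∧
          (∀ k : ℤ, ∀ Q ∈ 𝔻 k, MeasurableSet Q ∧ Q ⊆ E) ∧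
          -- (a) each generation covers `E` and consists of pairwise disjoint cubes
          (∀ k : ℤ, ⋃₀ 𝔻 k = E) ∧
          (∀ k : ℤ, (𝔻 k).PairwiseDisjoint id) ∧
          -- (b) nesting
          (∀ k m : ℤ, m ≤ k → ∀ Q ∈ 𝔻 k, ∀ Q' ∈ 𝔻 m, Q ⊆ Q' ∨ Q' ∩ Q = ∅) ∧
          -- (c) unique ancestors
          (∀ k m : ℤ, m < k → ∀ Q ∈ 𝔻 k, ∃! Q', Q' ∈ 𝔻 m ∧ Q ⊆ Q') ∧
          -- (d) cubes are comparable to surface balls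
          (∀ k : ℤ, ∀ Q ∈ 𝔻 k, ∃ x ∈ E,
            ball x (C⁻¹ * 2 ^ (-k)) ∩ E ⊆ Q ∧ Q ⊆ ball x (C * 2 ^ (-k)) ∩ E) :=
  dyadic_grid_existence_general n
end
end

section
/- Let E ⊆ ℝ^{n+1}, let 𝔻 = ⋃_{k∈ℤ} 𝔻_k be a dyadic grid on E, and fix Q⁰ which is either E or a cube of 𝔻. Let μ be a nonnegative Borel measure on Q⁰ with 0 < μ(Q) < ∞ for every Q ∈ 𝔻_{Q⁰}. Then for every pair of sequences of real numbers α = {α_Q}_{Q ∈ 𝔻_{Q⁰}} and β = {β_Q}_{Q ∈ 𝔻_{Q⁰}}, one has ∑_{Q ∈ 𝔻_{Q⁰}} |α_Q β_Q| ≤ 4 ∫_{Q⁰} 𝒜^μ_{Q⁰}α(x) ℬ^μ_{Q⁰}β(x) dμ(x). -/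
open Metric MeasureTheory
open scoped ENNReal

/-! Write `U(Q)² = ∑_{P ⊇ Q} α_P²/μ(P)` for the area function truncated to the ancestors
of `Q`, and `V(Q)` for the Carleson function maximised over the ancestors of `Q`. Weighted
AM-GM gives `2|α_Q β_Q| ≤ α_Q² V(Q)/U(Q) + β_Q² U(Q)/V(Q)`. Along the chain of cubes
containing a point `x`, the bounds `α_Q²/(μ(Q) U(Q)) ≤ 2 (U(Q) - U(Q⁺))`, with `Q⁺` the next
larger cube, telescope to `2 𝒜α(x)`; integrating against `V ≤ ℬβ` bounds the first sum by
`2 ∫ 𝒜α ℬβ`. For the second, `U(Q) ≤ ∑_{P ⊇ Q} α_P²/(μ(P) U(P))`; exchanging the sums over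
`Q ⊆ P` and using `∑_{Q ⊆ P} β_Q² ≤ V(P)² μ(P)` reduces it to the first. -/

/-- A dyadic grid on a set `E ⊆ ℝ^{n+1}`: a countable collection
`𝔻 = ⋃_{k ∈ ℤ} 𝔻_k` of Borel subsets of `E` ("cubes") such that
(i) each generation `𝔻_k` is a pairwise disjoint cover of `E`;
(ii) cubes of finer generations are contained in, or disjoint from, cubes of
coarser generations; (iii) every cube has a unique ancestor in each coarser
generation. -/
structure DyadicGrid {n : ℕ} (E : Set (EuclideanSpace ℝ (Fin (n + 1)))) where
  cubes : ℤ → Set (Set (EuclideanSpace ℝ (Fin (n + 1))))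
  countable : (⋃ k : ℤ, cubes k).Countable
  borel : ∀ k : ℤ, ∀ Q ∈ cubes k, MeasurableSet Q
  cover : ∀ k : ℤ, ⋃₀ cubes k = E
  pairwiseDisjoint : ∀ k : ℤ, (cubes k).PairwiseDisjoint id
  nested : ∀ ⦃k j : ℤ⦄, j ≤ k → ∀ Q ∈ cubes k, ∀ Q' ∈ cubes j, Q ⊆ Q' ∨ Q ∩ Q' = ∅
  parent : ∀ ⦃k j : ℤ⦄, j < k → ∀ Q ∈ cubes k, ∃! Q', Q' ∈ cubes j ∧ Q ⊆ Q'

/-- `Q0` is either `E` itself, in which case `DQ0` consists of all the cubes of the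
grid, or `Q0` is a cube of the grid, in which case `DQ0` consists of the cubes
contained in `Q0` of generation at least that of `Q0`. -/
def IsLocalizedFamily {n : ℕ} {E : Set (EuclideanSpace ℝ (Fin (n + 1)))}
    (D : DyadicGrid E) (Q0 : Set (EuclideanSpace ℝ (Fin (n + 1))))
    (DQ0 : Set (Set (EuclideanSpace ℝ (Fin (n + 1))))) : Prop :=
  (Q0 = E ∧ DQ0 = ⋃ k : ℤ, D.cubes k) ∨
  (∃ k0 : ℤ, Q0 ∈ D.cubes k0 ∧
    DQ0 = {Q | ∃ k : ℤ, k0 ≤ k ∧ Q ∈ D.cubes k ∧ Q ⊆ Q0})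

open Set

namespace ENNReal

theorem two_mul_le_add_sq (a b : ℝ≥0∞) : 2 * a * b ≤ a ^ 2 + b ^ 2 := by
  rcases eq_or_ne a ⊤ with rfl | ha
  · simp
  rcases eq_or_ne b ⊤ with rfl | hb
  · simp
  lift a to NNReal using ha
  lift b to NNReal using hb
  exact_mod_cast _root_.two_mul_le_add_sq a b

theorem rpow_half_sq (x : ℝ≥0∞) : (x ^ (1 / 2 : ℝ)) ^ 2 = x := by
  rw [← rpow_natCast, ← rpow_mul]
  norm_num

theorem two_mul_rpow_half_le_add (p q : ℝ≥0∞) : 2 * (p * q) ^ (1 / 2 : ℝ) ≤ p + q := by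
  rw [mul_rpow_of_nonneg _ _ (by norm_num), ← mul_assoc]
  conv_rhs => rw [← rpow_half_sq p, ← rpow_half_sq q]
  exact two_mul_le_add_sq _ _

theorem two_mul_rpow_half_le_mul_add_div {s : ℝ≥0∞} (hs0 : s ≠ 0) (hs : s ≠ ⊤) (p q : ℝ≥0∞) :
    2 * (p * q) ^ (1 / 2 : ℝ) ≤ p * s + q / s := by
  have hpq : p * q = p * s * (q / s) := by rw [mul_assoc, ENNReal.mul_div_cancel hs0 hs]
  rw [hpq]
  exact two_mul_rpow_half_le_add _ _

-- `c / u ≤ 2 (u - v)`, in a form free of truncated subtraction.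
theorem two_mul_add_div_le {v u c : ℝ≥0∞} (h : v ^ 2 + c ≤ u ^ 2) : 2 * v + c / u ≤ 2 * u := by
  rcases eq_or_ne u ⊤ with rfl | hu
  · simp
  rcases eq_or_ne u 0 with rfl | hu0
  · obtain ⟨hv, hc⟩ : v ^ 2 = 0 ∧ c = 0 := by simpa using h
    simp_all
  rw [← ENNReal.mul_le_mul_iff_left hu0 hu, add_mul, ENNReal.div_mul_cancel hu0 hu]
  calc 2 * v * u + c ≤ (v ^ 2 + u ^ 2) + c := by gcongr; exact two_mul_le_add_sq v u
    _ ≤ u ^ 2 + u ^ 2 := by rw [add_right_comm]; gcongr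
    _ = 2 * u * u := by ring

theorem div_mul_cancel_of_le_sq {c u : ℝ≥0∞} (hc : c ≤ u ^ 2) (hu : u ≠ ⊤) : c / u * u = c := by
  rcases eq_or_ne u 0 with rfl | hu0
  · simp_all
  exact ENNReal.div_mul_cancel hu0 hu

theorem div_mul_sq_mul_le {v : ℝ≥0∞} (hv : v ≠ ⊤) (x m : ℝ≥0∞) :
    x / v * (v ^ 2 * m) ≤ x * v * m := by
  rcases eq_or_ne v 0 with rfl | hv0
  · simp
  refine le_of_eq ?_
  calc x / v * (v ^ 2 * m) = x * v * m * (v⁻¹ * v) := by rw [div_eq_mul_inv]; ring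
    _ = x * v * m := by rw [ENNReal.inv_mul_cancel hv0 hv, mul_one]

theorem tsum_sep_eq_tsum_ite {ι : Type*} (s : Set ι) (p : ι → Prop) [DecidablePred p]
    (f : ι → ℝ≥0∞) :
    ∑' i : {i ∈ s | p i}, f i = ∑' i : s, if p i then f i else 0 := by
  rw [tsum_subtype, tsum_subtype (f := fun i => if p i then f i else 0)]
  congr 1 with i
  by_cases hs : i ∈ s <;> by_cases hp : p i <;> simp [indicator, hs, hp]

theorem tsum_tsum_sep_comm {ι : Type*} (s : Set ι) (r : ι → ι → Prop) (f : ι → ι → ℝ≥0∞) :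
    ∑' i : s, ∑' j : {j ∈ s | r i j}, f i j = ∑' j : s, ∑' i : {i ∈ s | r i j}, f i j := by
  classical
  calc ∑' i : s, ∑' j : {j ∈ s | r i j}, f i j
      = ∑' (i : s) (j : s), if r i j then f i j else 0 :=
        tsum_congr fun i => tsum_sep_eq_tsum_ite _ _ _
    _ = ∑' (j : s) (i : s), if r i j then f i j else 0 := ENNReal.tsum_comm
    _ = _ := tsum_congr fun j => (tsum_sep_eq_tsum_ite s (r · j) (f · j)).symm

end ENNReal

theorem Finset.sum_div_le_two_mul_of_isChain {α : Type*} [PartialOrder α] {c u : α → ℝ≥0∞}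
    {s : Finset α} (hs : IsChain (· ≤ ·) (s : Set α)) (hc : ∀ p ∈ s, c p ≤ u p ^ 2)
    (hstep : ∀ p ∈ s, ∀ q ∈ s, p < q → u q ^ 2 + c p ≤ u p ^ 2) {b : ℝ≥0∞}
    (hb : ∀ p ∈ s, u p ≤ b) : ∑ p ∈ s, c p / u p ≤ 2 * b := by
  classical
  induction s using Finset.strongInduction generalizing b with
  | H s ih =>
  rcases s.eq_empty_or_nonempty with rfl | hne
  · simp
  obtain ⟨m, hm, hm_min⟩ := Finset.exists_minimal hne
  have hm_lt : ∀ q ∈ s.erase m, m < q := fun q hq => by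
    obtain ⟨hqm, hqs⟩ := mem_erase.1 hq
    rcases hs.total hm hqs with h | h
    · exact lt_of_le_of_ne h (Ne.symm hqm)
    · exact absurd (le_antisymm h (hm_min hqs h)) hqm
  obtain ⟨v, hv, hsum⟩ : ∃ v, v ^ 2 + c m ≤ u m ^ 2 ∧ ∑ p ∈ s.erase m, c p / u p ≤ 2 * v := by
    rcases (s.erase m).eq_empty_or_nonempty with ht | ht
    · exact ⟨0, by simpa using hc m hm, by simp [ht]⟩
    obtain ⟨q, hq, hq_max⟩ := (s.erase m).exists_max_image u ht
    exact ⟨u q, hstep m hm q (mem_of_mem_erase hq) (hm_lt q hq),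
      ih _ (erase_ssubset hm) (hs.mono (by simp)) (fun p hp => hc p (mem_of_mem_erase hp))
        (fun p hp q hq => hstep p (mem_of_mem_erase hp) q (mem_of_mem_erase hq)) hq_max⟩
  calc ∑ p ∈ s, c p / u p = c m / u m + ∑ p ∈ s.erase m, c p / u p := (add_sum_erase s _ hm).symm
    _ ≤ 2 * v + c m / u m := by rw [add_comm]; gcongr
    _ ≤ 2 * u m := ENNReal.two_mul_add_div_le hv
    _ ≤ 2 * b := by gcongr; exact hb m hm

namespace TentSpace

variable {X : Type*} [MeasurableSpace X] (D : Set (Set X)) (μ : Measure X)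

/- With `a = α²` and `b = β²`, `areaFun` and `carlesonFun` are `𝒜^μ α` and `ℬ^μ β`, while
`areaAbove` and `carlesonAbove` are the quantities `U` and `V` of the header. -/

noncomputable def ancestorSum (a : Set X → ℝ≥0∞) (Q : Set X) : ℝ≥0∞ :=
  ∑' P : {P ∈ D | Q ⊆ P}, a P / μ P

noncomputable def areaAbove (a : Set X → ℝ≥0∞) (Q : Set X) : ℝ≥0∞ :=
  ancestorSum D μ a Q ^ (1 / 2 : ℝ)

noncomputable def descendantSum (b : Set X → ℝ≥0∞) (Q : Set X) : ℝ≥0∞ :=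
  ∑' Q' : {Q' ∈ D | Q' ⊆ Q}, b Q'

noncomputable def carlesonAbove (b : Set X → ℝ≥0∞) (Q : Set X) : ℝ≥0∞ :=
  ⨆ P ∈ D, ⨆ _ : Q ⊆ P, (descendantSum D b P / μ P) ^ (1 / 2 : ℝ)

noncomputable def areaFun (a : Set X → ℝ≥0∞) (x : X) : ℝ≥0∞ :=
  (∑' Q : {Q ∈ D | x ∈ Q}, a Q / μ Q) ^ (1 / 2 : ℝ)

noncomputable def carlesonFun (b : Set X → ℝ≥0∞) (x : X) : ℝ≥0∞ :=
  ⨆ Q ∈ D, ⨆ _ : x ∈ Q, (descendantSum D b Q / μ Q) ^ (1 / 2 : ℝ)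

variable {D μ} {a b : Set X → ℝ≥0∞} {Q P : Set X} {x : X}

theorem div_le_ancestorSum (hQ : Q ∈ D) : a Q / μ Q ≤ ancestorSum D μ a Q :=
  ENNReal.le_tsum (f := fun P : {P ∈ D | Q ⊆ P} => a P / μ P) ⟨Q, hQ, subset_rfl⟩

theorem ancestorSum_le_tsum {t : Set (Set X)} (h : {P ∈ D | Q ⊆ P} ⊆ t) :
    ancestorSum D μ a Q ≤ ∑' P : t, a P / μ P :=
  ENNReal.tsum_mono_subtype (fun P => a P / μ P) h

theorem ancestorSum_add_div_le (hQ : Q ∈ D) (hQP : Q ⊂ P) :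
    ancestorSum D μ a P + a Q / μ Q ≤ ancestorSum D μ a Q := by
  have hdisj : Disjoint {P' ∈ D | P ⊆ P'} {Q} :=
    disjoint_singleton_right.2 fun h => hQP.2 h.2
  calc ancestorSum D μ a P + a Q / μ Q
      = ∑' P' : ↥({P' ∈ D | P ⊆ P'} ∪ {Q}), a P' / μ P' := by
        rw [ENNReal.summable.tsum_union_disjoint (f := fun P => a P / μ P) hdisj
          ENNReal.summable, tsum_singleton (f := fun P => a P / μ P)]
        rfl
    _ ≤ ancestorSum D μ a Q := by
        refine ENNReal.tsum_mono_subtype (fun P => a P / μ P) (union_subset ?_ ?_)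
        · exact fun P' hP' => ⟨hP'.1, hQP.1.trans hP'.2⟩
        · exact singleton_subset_iff.2 ⟨hQ, subset_rfl⟩

theorem sq_areaAbove : areaAbove D μ a Q ^ 2 = ancestorSum D μ a Q :=
  ENNReal.rpow_half_sq _

theorem div_le_sq_areaAbove (hQ : Q ∈ D) : a Q / μ Q ≤ areaAbove D μ a Q ^ 2 :=
  sq_areaAbove (a := a) ▸ div_le_ancestorSum hQ

theorem areaAbove_anti (hQP : Q ⊆ P) : areaAbove D μ a P ≤ areaAbove D μ a Q :=
  ENNReal.rpow_le_rpow (ancestorSum_le_tsum fun _ h => ⟨h.1, hQP.trans h.2⟩) (by norm_num)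

theorem areaAbove_le_areaFun (hx : x ∈ Q) : areaAbove D μ a Q ≤ areaFun D μ a x :=
  ENNReal.rpow_le_rpow (ancestorSum_le_tsum fun _ h => ⟨h.1, h.2 hx⟩) (by norm_num)

theorem areaAbove_ne_zero (hQ : Q ∈ D) (hμ : μ Q ≠ ⊤) (ha : a Q ≠ 0) :
    areaAbove D μ a Q ≠ 0 := by
  intro h
  have := div_le_sq_areaAbove (μ := μ) (a := a) hQ
  simp_all [ENNReal.div_eq_zero_iff]

theorem carlesonAbove_anti (hQP : Q ⊆ P) : carlesonAbove D μ b P ≤ carlesonAbove D μ b Q :=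
  iSup₂_mono fun _ _ => iSup_mono' fun h => ⟨hQP.trans h, le_rfl⟩

theorem carlesonAbove_le_carlesonFun (hx : x ∈ Q) :
    carlesonAbove D μ b Q ≤ carlesonFun D μ b x :=
  iSup₂_mono fun _ _ => iSup_mono' fun h => ⟨h hx, le_rfl⟩

theorem descendantSum_div_le_sq_carlesonAbove (hQ : Q ∈ D) :
    descendantSum D b Q / μ Q ≤ carlesonAbove D μ b Q ^ 2 := by
  rw [← ENNReal.rpow_half_sq (descendantSum D b Q / μ Q)]
  gcongr
  exact le_iSup₂_of_le Q hQ (le_iSup_of_le subset_rfl le_rfl)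

theorem carlesonAbove_ne_zero (hQ : Q ∈ D) (hμ : μ Q ≠ ⊤) (hb : b Q ≠ 0) :
    carlesonAbove D μ b Q ≠ 0 := by
  intro h
  have hbS : b Q ≤ descendantSum D b Q :=
    ENNReal.le_tsum (f := fun Q' : {Q' ∈ D | Q' ⊆ Q} => b Q') ⟨Q, hQ, subset_rfl⟩
  have := (ENNReal.div_le_div_right hbS (μ Q)).trans (descendantSum_div_le_sq_carlesonAbove hQ)
  simp_all [ENNReal.div_eq_zero_iff]


theorem areaAbove_le_tsum_div (hU : areaAbove D μ a Q ≠ ⊤) :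
    areaAbove D μ a Q ≤ ∑' P : {P ∈ D | Q ⊆ P}, a P / μ P / areaAbove D μ a P := by
  rcases eq_or_ne (areaAbove D μ a Q) 0 with h0 | h0
  · simp [h0]
  rw [← ENNReal.mul_le_mul_iff_left h0 hU, ← sq, sq_areaAbove, ancestorSum,
    ← ENNReal.tsum_mul_right]
  refine ENNReal.tsum_le_tsum fun P => ?_
  have hPQ : areaAbove D μ a P ≤ areaAbove D μ a Q := areaAbove_anti P.2.2
  calc a P / μ P = a P / μ P / areaAbove D μ a P * areaAbove D μ a P :=
        (ENNReal.div_mul_cancel_of_le_sq (div_le_sq_areaAbove P.2.1)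
          (ne_top_of_le_ne_top hU hPQ)).symm
    _ ≤ a P / μ P / areaAbove D μ a P * areaAbove D μ a Q := by gcongr

theorem tsum_div_areaAbove_le_two_mul_areaFun
    (hnest : ∀ Q ∈ D, ∀ Q' ∈ D, (Q ∩ Q').Nonempty → Q ⊆ Q' ∨ Q' ⊆ Q) (a : Set X → ℝ≥0∞)
    (x : X) :
    ∑' Q : {Q ∈ D | x ∈ Q}, a Q / μ Q / areaAbove D μ a Q ≤ 2 * areaFun D μ a x := by
  refine ENNReal.summable.tsum_le_of_sum_le fun s => ?_
  refine Finset.sum_div_le_two_mul_of_isChain (c := fun Q : {Q ∈ D | x ∈ Q} => a Q / μ Q)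
    (u := fun Q => areaAbove D μ a Q) ?_ ?_ ?_ ?_
  · intro Q _ Q' _ _
    exact hnest Q Q.2.1 Q' Q'.2.1 ⟨x, Q.2.2, Q'.2.2⟩
  · intro Q _
    exact div_le_sq_areaAbove Q.2.1
  · intro Q _ P _ hQP
    rw [sq_areaAbove, sq_areaAbove]
    exact ancestorSum_add_div_le Q.2.1 hQP
  · intro Q _
    exact areaAbove_le_areaFun Q.2.2

theorem tsum_mul_measure_le_two_mul_lintegral {Q0 : Set X} (hcount : D.Countable)
    (hmeas : ∀ Q ∈ D, MeasurableSet Q) (hsub : ∀ Q ∈ D, Q ⊆ Q0)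
    (hnest : ∀ Q ∈ D, ∀ Q' ∈ D, (Q ∩ Q').Nonempty → Q ⊆ Q' ∨ Q' ⊆ Q) (a b : Set X → ℝ≥0∞) :
    ∑' Q : D, a Q / μ Q / areaAbove D μ a Q * carlesonAbove D μ b Q * μ Q ≤
      2 * ∫⁻ x in Q0, areaFun D μ a x * carlesonFun D μ b x ∂μ := by
  classical
  have : Countable D := hcount.to_subtype
  set k : Set X → ℝ≥0∞ := fun Q => a Q / μ Q / areaAbove D μ a Q * carlesonAbove D μ b Q
  have hk : ∀ x, ∑' Q : D, (Q : Set X).indicator (fun _ => k Q) x ≤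
      2 * (areaFun D μ a x * carlesonFun D μ b x) := fun x =>
    calc ∑' Q : D, (Q : Set X).indicator (fun _ => k Q) x = ∑' Q : {Q ∈ D | x ∈ Q}, k Q := by
          simp only [ENNReal.tsum_sep_eq_tsum_ite, indicator_apply]
      _ ≤ ∑' Q : {Q ∈ D | x ∈ Q}, a Q / μ Q / areaAbove D μ a Q * carlesonFun D μ b x :=
          ENNReal.tsum_le_tsum fun Q => mul_le_mul_right (carlesonAbove_le_carlesonFun Q.2.2) _
      _ = (∑' Q : {Q ∈ D | x ∈ Q}, a Q / μ Q / areaAbove D μ a Q) * carlesonFun D μ b x :=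
          ENNReal.tsum_mul_right
      _ ≤ 2 * areaFun D μ a x * carlesonFun D μ b x :=
          mul_le_mul_left (tsum_div_areaAbove_le_two_mul_areaFun hnest a x) _
      _ = 2 * (areaFun D μ a x * carlesonFun D μ b x) := mul_assoc _ _ _
  calc ∑' Q : D, k Q * μ Q = ∑' Q : D, ∫⁻ x in Q0, (Q : Set X).indicator (fun _ => k Q) x ∂μ := by
        refine tsum_congr fun Q => ?_
        rw [lintegral_indicator_const (hmeas Q Q.2), Measure.restrict_apply (hmeas Q Q.2),
          inter_eq_self_of_subset_left (hsub Q Q.2)]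
    _ = ∫⁻ x in Q0, ∑' Q : D, (Q : Set X).indicator (fun _ => k Q) x ∂μ :=
        (lintegral_tsum fun Q : D => (measurable_const.indicator (hmeas Q Q.2)).aemeasurable).symm
    _ ≤ ∫⁻ x in Q0, 2 * (areaFun D μ a x * carlesonFun D μ b x) ∂μ := lintegral_mono hk
    _ = 2 * ∫⁻ x in Q0, areaFun D μ a x * carlesonFun D μ b x ∂μ :=
        lintegral_const_mul' _ _ (by norm_num)

theorem tsum_mul_areaAbove_div_le (hμ0 : ∀ Q ∈ D, μ Q ≠ 0) (hμ_top : ∀ Q ∈ D, μ Q ≠ ⊤)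
    (hfin : ∀ Q ∈ D, b Q ≠ 0 → areaAbove D μ a Q ≠ ⊤) :
    ∑' Q : D, b Q * (areaAbove D μ a Q / carlesonAbove D μ b Q) ≤
      ∑' Q : D, a Q / μ Q / areaAbove D μ a Q * carlesonAbove D μ b Q * μ Q := by
  set w : Set X → ℝ≥0∞ := fun P => a P / μ P / areaAbove D μ a P
  have hQ : ∀ Q : D, b Q * (areaAbove D μ a Q / carlesonAbove D μ b Q) ≤
      ∑' P : {P ∈ D | Q.1 ⊆ P}, b Q * (w P / carlesonAbove D μ b P) := fun Q => by
    rcases eq_or_ne (b Q) 0 with hb | hb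
    · simp [hb]
    calc b Q * (areaAbove D μ a Q / carlesonAbove D μ b Q)
        ≤ b Q * ((∑' P : {P ∈ D | Q.1 ⊆ P}, w P) / carlesonAbove D μ b Q) := by
          gcongr; exact areaAbove_le_tsum_div (hfin Q Q.2 hb)
      _ = ∑' P : {P ∈ D | Q.1 ⊆ P}, b Q * (w P / carlesonAbove D μ b Q) := by
          simp only [div_eq_mul_inv, ENNReal.tsum_mul_right, ENNReal.tsum_mul_left]
      _ ≤ ∑' P : {P ∈ D | Q.1 ⊆ P}, b Q * (w P / carlesonAbove D μ b P) :=
          ENNReal.tsum_le_tsum fun P => by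
            gcongr; exact carlesonAbove_anti P.2.2
  have hP : ∀ P : D, descendantSum D b P * (w P / carlesonAbove D μ b P) ≤
      w P * carlesonAbove D μ b P * μ P := fun P => by
    rcases eq_or_ne (carlesonAbove D μ b P) ⊤ with hV | hV
    · simp [hV]
    have hS : descendantSum D b P ≤ carlesonAbove D μ b P ^ 2 * μ P :=
      (ENNReal.div_le_iff (hμ0 P P.2) (hμ_top P P.2)).1 (descendantSum_div_le_sq_carlesonAbove P.2)
    calc descendantSum D b P * (w P / carlesonAbove D μ b P)
        ≤ w P / carlesonAbove D μ b P * (carlesonAbove D μ b P ^ 2 * μ P) := by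
          rw [mul_comm]; gcongr
      _ ≤ w P * carlesonAbove D μ b P * μ P := ENNReal.div_mul_sq_mul_le hV _ _
  calc ∑' Q : D, b Q * (areaAbove D μ a Q / carlesonAbove D μ b Q)
      ≤ ∑' (Q : D) (P : {P ∈ D | Q.1 ⊆ P}), b Q * (w P / carlesonAbove D μ b P) :=
        ENNReal.tsum_le_tsum hQ
    _ = ∑' (P : D) (Q : {Q ∈ D | Q ⊆ P.1}), b Q * (w P / carlesonAbove D μ b P) :=
        ENNReal.tsum_tsum_sep_comm D (· ⊆ ·) fun Q P => b Q * (w P / carlesonAbove D μ b P)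
    _ = ∑' P : D, descendantSum D b P * (w P / carlesonAbove D μ b P) := by
        simp only [ENNReal.tsum_mul_right]; rfl
    _ ≤ ∑' P : D, w P * carlesonAbove D μ b P * μ P := ENNReal.tsum_le_tsum hP

theorem two_mul_rpow_half_le (hQ : Q ∈ D) (hμ0 : μ Q ≠ 0) (hμ_top : μ Q ≠ ⊤)
    (hfin : areaAbove D μ a Q * carlesonAbove D μ b Q ≠ ⊤) :
    2 * (a Q * b Q) ^ (1 / 2 : ℝ) ≤
      a Q / μ Q / areaAbove D μ a Q * carlesonAbove D μ b Q * μ Q +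
        b Q * (areaAbove D μ a Q / carlesonAbove D μ b Q) := by
  rcases eq_or_ne (a Q) 0 with ha | ha
  · simp [ha]
  rcases eq_or_ne (b Q) 0 with hb | hb
  · simp [hb]
  set U := areaAbove D μ a Q
  set V := carlesonAbove D μ b Q
  have hU0 : U ≠ 0 := areaAbove_ne_zero hQ hμ_top ha
  have hV0 : V ≠ 0 := carlesonAbove_ne_zero hQ hμ_top hb
  have hU : U ≠ ⊤ := fun h => hfin (by rw [h, ENNReal.top_mul hV0])
  have hV : V ≠ ⊤ := fun h => hfin (by rw [h, ENNReal.mul_top hU0])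
  have h1 : a Q / μ Q / U * V * μ Q = a Q * (V / U) := by
    calc a Q / μ Q / U * V * μ Q = a Q * (V / U) * (μ Q * (μ Q)⁻¹) := by
          simp only [div_eq_mul_inv]; ring
      _ = a Q * (V / U) := by rw [ENNReal.mul_inv_cancel hμ0 hμ_top, mul_one]
  have h2 : b Q * (U / V) = b Q / (V / U) := by
    rw [div_eq_mul_inv (b Q), ENNReal.inv_div (Or.inl hU) (Or.inl hU0)]
  rw [h1, h2]
  exact ENNReal.two_mul_rpow_half_le_mul_add_div (ENNReal.div_pos hV0 hU).ne'
    (ENNReal.div_lt_top hV hU0).ne _ _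

theorem areaAbove_mul_carlesonAbove_mul_le_lintegral {Q0 : Set X} (hmeas : MeasurableSet Q)
    (hsub : Q ⊆ Q0) :
    areaAbove D μ a Q * carlesonAbove D μ b Q * μ Q ≤
      ∫⁻ x in Q0, areaFun D μ a x * carlesonFun D μ b x ∂μ :=
  calc areaAbove D μ a Q * carlesonAbove D μ b Q * μ Q
      = ∫⁻ _ in Q, areaAbove D μ a Q * carlesonAbove D μ b Q ∂μ := (setLIntegral_const _ _).symm
    _ ≤ ∫⁻ x in Q, areaFun D μ a x * carlesonFun D μ b x ∂μ :=
        setLIntegral_mono' hmeas fun _ hx =>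
          mul_le_mul' (areaAbove_le_areaFun hx) (carlesonAbove_le_carlesonFun hx)
    _ ≤ ∫⁻ x in Q0, areaFun D μ a x * carlesonFun D μ b x ∂μ := lintegral_mono_set hsub

theorem tsum_rpow_half_le_two_mul_lintegral {Q0 : Set X} (hcount : D.Countable)
    (hmeas : ∀ Q ∈ D, MeasurableSet Q) (hsub : ∀ Q ∈ D, Q ⊆ Q0)
    (hnest : ∀ Q ∈ D, ∀ Q' ∈ D, (Q ∩ Q').Nonempty → Q ⊆ Q' ∨ Q' ⊆ Q)
    (hμ0 : ∀ Q ∈ D, μ Q ≠ 0) (hμ_top : ∀ Q ∈ D, μ Q ≠ ⊤) (a b : Set X → ℝ≥0∞) :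
    ∑' Q : D, (a Q * b Q) ^ (1 / 2 : ℝ) ≤
      2 * ∫⁻ x in Q0, areaFun D μ a x * carlesonFun D μ b x ∂μ := by
  set I := ∫⁻ x in Q0, areaFun D μ a x * carlesonFun D μ b x ∂μ
  rcases eq_or_ne I ⊤ with hI | hI
  · simp [hI]
  -- A finite integral keeps the AM-GM weights `V(Q) / U(Q)` away from the junk value `⊤ / ⊤ = 0`.
  have hfin : ∀ Q ∈ D, areaAbove D μ a Q * carlesonAbove D μ b Q ≠ ⊤ := fun Q hQ h =>
    hI <| top_le_iff.1 <| calc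
      ⊤ = areaAbove D μ a Q * carlesonAbove D μ b Q * μ Q := by rw [h, ENNReal.top_mul (hμ0 Q hQ)]
      _ ≤ I := areaAbove_mul_carlesonAbove_mul_le_lintegral (hmeas Q hQ) (hsub Q hQ)
  have hU : ∀ Q ∈ D, b Q ≠ 0 → areaAbove D μ a Q ≠ ⊤ := fun Q hQ hb h =>
    hfin Q hQ (by rw [h, ENNReal.top_mul (carlesonAbove_ne_zero hQ (hμ_top Q hQ) hb)])
  have claim := tsum_mul_measure_le_two_mul_lintegral (μ := μ) hcount hmeas hsub hnest a b
  have key : 2 * ∑' Q : D, (a Q * b Q) ^ (1 / 2 : ℝ) ≤ 2 * (2 * I) :=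
    calc 2 * ∑' Q : D, (a Q * b Q) ^ (1 / 2 : ℝ)
        = ∑' Q : D, 2 * (a Q * b Q) ^ (1 / 2 : ℝ) := ENNReal.tsum_mul_left.symm
      _ ≤ ∑' Q : D, (a Q / μ Q / areaAbove D μ a Q * carlesonAbove D μ b Q * μ Q +
            b Q * (areaAbove D μ a Q / carlesonAbove D μ b Q)) :=
          ENNReal.tsum_le_tsum fun Q =>
            two_mul_rpow_half_le Q.2 (hμ0 Q Q.2) (hμ_top Q Q.2) (hfin Q Q.2)
      _ = _ := ENNReal.tsum_add
      _ ≤ 2 * I + 2 * I := add_le_add claim ((tsum_mul_areaAbove_div_le hμ0 hμ_top hU).trans claim)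
      _ = 2 * (2 * I) := by ring
  exact (ENNReal.mul_le_mul_iff_right two_ne_zero ENNReal.ofNat_ne_top).1 key

end TentSpace

theorem DyadicGrid.subset_or_subset_of_inter_nonempty {n : ℕ}
    {E : Set (EuclideanSpace ℝ (Fin (n + 1)))} (D : DyadicGrid E) {k j : ℤ}
    {Q Q' : Set (EuclideanSpace ℝ (Fin (n + 1)))} (hQ : Q ∈ D.cubes k) (hQ' : Q' ∈ D.cubes j)
    (h : (Q ∩ Q').Nonempty) : Q ⊆ Q' ∨ Q' ⊆ Q := by
  rcases le_total j k with hjk | hkj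
  · exact (D.nested hjk Q hQ Q' hQ').imp_right fun h' => absurd h' h.ne_empty
  · refine ((D.nested hkj Q' hQ' Q hQ).imp_right fun h' => ?_).symm
    exact absurd (inter_comm Q Q' ▸ h') h.ne_empty

namespace IsLocalizedFamily

variable {n : ℕ} {E : Set (EuclideanSpace ℝ (Fin (n + 1)))} {D : DyadicGrid E}
  {Q0 Q : Set (EuclideanSpace ℝ (Fin (n + 1)))} {DQ0 : Set (Set (EuclideanSpace ℝ (Fin (n + 1))))}

theorem exists_mem_cubes (h : IsLocalizedFamily D Q0 DQ0) (hQ : Q ∈ DQ0) :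
    ∃ k, Q ∈ D.cubes k := by
  rcases h with ⟨-, rfl⟩ | ⟨k0, -, rfl⟩
  · exact mem_iUnion.1 hQ
  · obtain ⟨k, -, hk, -⟩ := hQ
    exact ⟨k, hk⟩

theorem subset (h : IsLocalizedFamily D Q0 DQ0) (hQ : Q ∈ DQ0) : Q ⊆ Q0 := by
  rcases h with ⟨rfl, rfl⟩ | ⟨k0, -, rfl⟩
  · obtain ⟨k, hk⟩ := mem_iUnion.1 hQ
    exact D.cover k ▸ subset_sUnion_of_mem hk
  · obtain ⟨-, -, -, hQQ0⟩ := hQ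
    exact hQQ0

theorem countable (h : IsLocalizedFamily D Q0 DQ0) : DQ0.Countable :=
  D.countable.mono fun _ hQ => mem_iUnion.2 (h.exists_mem_cubes hQ)

theorem measurableSet (h : IsLocalizedFamily D Q0 DQ0) (hQ : Q ∈ DQ0) : MeasurableSet Q :=
  let ⟨k, hk⟩ := h.exists_mem_cubes hQ
  D.borel k Q hk

theorem subset_or_subset_of_inter_nonempty (h : IsLocalizedFamily D Q0 DQ0) :
    ∀ Q ∈ DQ0, ∀ Q' ∈ DQ0, (Q ∩ Q').Nonempty → Q ⊆ Q' ∨ Q' ⊆ Q := fun _ hQ _ hQ' =>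
  let ⟨_, hk⟩ := h.exists_mem_cubes hQ
  let ⟨_, hj⟩ := h.exists_mem_cubes hQ'
  D.subset_or_subset_of_inter_nonempty hk hj

end IsLocalizedFamily

/-- **Discrete tent-space duality** (Lemma `lemma:tentspaces` of the paper).
For any two sequences `α, β` of real numbers indexed by the cubes of `𝔻_{Q⁰}` one has
`∑_{Q ∈ 𝔻_{Q⁰}} |α_Q β_Q| ≤ 4 ∫_{Q⁰} 𝒜^μ_{Q⁰}α(x) · ℬ^μ_{Q⁰}β(x) dμ(x)`,
where `𝒜^μ_{Q⁰}α(x) = (∑_{x ∈ Q ∈ 𝔻_{Q⁰}} α_Q²/μ(Q))^{1/2}` and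
`ℬ^μ_{Q⁰}β(x) = sup_{x ∈ Q ∈ 𝔻_{Q⁰}} (μ(Q)⁻¹ ∑_{Q' ∈ 𝔻_Q} β_{Q'}²)^{1/2}`. -/
theorem discrete_tent_space_duality {n : ℕ}
    (E : Set (EuclideanSpace ℝ (Fin (n + 1)))) (D : DyadicGrid E)
    (Q0 : Set (EuclideanSpace ℝ (Fin (n + 1))))
    (DQ0 : Set (Set (EuclideanSpace ℝ (Fin (n + 1)))))
    (hQ0 : IsLocalizedFamily D Q0 DQ0)
    (μ : Measure (EuclideanSpace ℝ (Fin (n + 1))))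
    (hμ : ∀ Q ∈ DQ0, 0 < μ Q ∧ μ Q < ⊤)
    (α β : Set (EuclideanSpace ℝ (Fin (n + 1))) → ℝ) :
    ∑' Q : DQ0, ENNReal.ofReal |α Q.1 * β Q.1| ≤
      4 * ∫⁻ x in Q0,
        (∑' Q : {Q // Q ∈ DQ0 ∧ x ∈ Q}, ENNReal.ofReal (α Q.1 ^ 2) / μ Q.1) ^ (1/2 : ℝ) *
        (⨆ Q ∈ DQ0, ⨆ _ : x ∈ Q,
          ((∑' Q' : {Q' // Q' ∈ DQ0 ∧ Q' ⊆ Q}, ENNReal.ofReal (β Q'.1 ^ 2)) / μ Q)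
            ^ (1/2 : ℝ)) ∂μ := by
  have hsqrt : ∀ s t : ℝ,
      ENNReal.ofReal |s * t| = (ENNReal.ofReal (s ^ 2) * ENNReal.ofReal (t ^ 2)) ^ (1 / 2 : ℝ) := by
    intro s t
    rw [← ENNReal.ofReal_mul (sq_nonneg s), ← mul_pow, ← sq_abs, ENNReal.ofReal_pow (abs_nonneg _),
      ← ENNReal.rpow_natCast, ← ENNReal.rpow_mul]
    norm_num
  simp only [hsqrt]
  refine (TentSpace.tsum_rpow_half_le_two_mul_lintegral hQ0.countable
    (fun _ => hQ0.measurableSet) (fun _ => hQ0.subset) hQ0.subset_or_subset_of_inter_nonempty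
    (fun Q hQ => (hμ Q hQ).1.ne') (fun Q hQ => (hμ Q hQ).2.ne)
    (fun Q => ENNReal.ofReal (α Q ^ 2)) (fun Q => ENNReal.ofReal (β Q ^ 2))).trans ?_
  exact mul_le_mul_left (by norm_num) _
end

section
/- Let E ⊆ ℝ^{n+1}, let 𝔻 = ⋃_{k∈ℤ} 𝔻_k be a dyadic grid on E, and fix Q⁰ which is either E or a cube of 𝔻. Let μ and ν be nonnegative Borel measures on Q⁰ with 0 < μ(Q) < ∞ and 0 < ν(Q) < ∞ for every Q ∈ 𝔻_{Q⁰}. Assume there exist α, β ∈ (0,1) such that for every Q ∈ 𝔻_{Q⁰} and every Borel set F ⊆ Q: μ(F)/μ(Q) > α implies ν(F)/ν(Q) ≥ β. Given a sequence of nonnegative real numbers γ = {γ_Q}_{Q ∈ 𝔻_{Q⁰}}, set ⦀γ⦀_ν := sup_{Q ∈ 𝔻_{Q⁰}} ν(Q)^{-1} ∑_{Q' ∈ 𝔻_Q} γ_{Q'} ν(Q') and ⦀γ⦀_μ := sup_{Q ∈ 𝔻_{Q⁰}} μ(Q)^{-1} ∑_{Q' ∈ 𝔻_Q} γ_{Q'}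 μ(Q'). Then (1−α) β ⦀γ⦀_μ ≤ ⦀γ⦀_ν ≤ ((1−α) β)^{-1} ⦀γ⦀_μ. -/
/-!
The bound `⦀γ⦀_ν ≤ ((1 - α) β)⁻¹ ⦀γ⦀_μ` is a stopping-time argument. Fix `s` with
`⦀γ⦀_μ < (1 - α) s` and a finite family `T` of cubes inside `Q`. For `R ∈ T` let `E_R ⊆ R` be
the set where `∑_{Q' ∈ T, Q' ⊆ R} γ_{Q'} 𝟙_{Q'} ≤ s`. Chebyshev's inequality and the Carleson
bound give `μ(R \ E_R) < (1 - α) μ(R)`, hence `ν(E_R) ≥ β ν(R)`. Because the cubes are nested or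
disjoint, the sets `E_R` through a point all lie in the largest such cube, whose truncated sum
controls them, so `∑_R γ_R 𝟙_{E_R} ≤ s`; integrating over `Q` against `ν` gives
`β ∑_{R ∈ T} γ_R ν(R) ≤ s ν(Q)`.

The lower bound is the upper bound for the pair `(ν, μ)`, which satisfies the condition with the
constants `(1 - β, 1 - α)` by passing to complements.
-/

open Metric MeasureTheory
open scoped ENNReal

open Set

def IsLaminar {X : Type*} (𝒟 : Set (Set X)) : Prop :=
  ∀ Q₁ ∈ 𝒟, ∀ Q₂ ∈ 𝒟, Q₁ ⊆ Q₂ ∨ Q₂ ⊆ Q₁ ∨ Disjoint Q₁ Q₂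

theorem IsLaminar.mono {X : Type*} {𝒟 𝒟' : Set (Set X)} (h : IsLaminar 𝒟') (h𝒟 : 𝒟 ⊆ 𝒟') :
    IsLaminar 𝒟 :=
  fun Q₁ hQ₁ Q₂ hQ₂ => h Q₁ (h𝒟 hQ₁) Q₂ (h𝒟 hQ₂)

namespace DyadicGrid

variable {n : ℕ} {E : Set (EuclideanSpace ℝ (Fin (n + 1)))} (D : DyadicGrid E)

theorem measurableSet_of_mem_iUnion {Q : Set (EuclideanSpace ℝ (Fin (n + 1)))}
    (hQ : Q ∈ ⋃ k, D.cubes k) : MeasurableSet Q :=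
  let ⟨k, hk⟩ := mem_iUnion.1 hQ
  D.borel k Q hk

theorem isLaminar : IsLaminar (⋃ k, D.cubes k) := by
  intro Q₁ hQ₁ Q₂ hQ₂
  obtain ⟨k₁, hk₁⟩ := mem_iUnion.1 hQ₁
  obtain ⟨k₂, hk₂⟩ := mem_iUnion.1 hQ₂
  rcases le_total k₂ k₁ with h | h
  · rcases D.nested h Q₁ hk₁ Q₂ hk₂ with h' | h'
    · exact Or.inl h'
    · exact Or.inr (Or.inr (disjoint_iff_inter_eq_empty.2 h'))
  · rcases D.nested h Q₂ hk₂ Q₁ hk₁ with h' | h'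
    · exact Or.inr (Or.inl h')
    · exact Or.inr (Or.inr (disjoint_iff_inter_eq_empty.2 h').symm)

end DyadicGrid

theorem IsLocalizedFamily.subset_iUnion_cubes {n : ℕ} {E : Set (EuclideanSpace ℝ (Fin (n + 1)))}
    {D : DyadicGrid E} {Q0 : Set (EuclideanSpace ℝ (Fin (n + 1)))}
    {DQ0 : Set (Set (EuclideanSpace ℝ (Fin (n + 1))))} (h : IsLocalizedFamily D Q0 DQ0) :
    DQ0 ⊆ ⋃ k, D.cubes k := by
  rcases h with ⟨-, rfl⟩ | ⟨k0, -, rfl⟩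
  · exact subset_rfl
  · rintro Q ⟨k, -, hQk, -⟩
    exact mem_iUnion.2 ⟨k, hQk⟩

noncomputable section LocalSum

open scoped Classical

variable {X : Type*} {𝒟 : Set (Set X)} {γ : Set X → ℝ≥0∞} {s : ℝ≥0∞}

def localSum (T : Finset (Set X)) (γ : Set X → ℝ≥0∞) (R : Set X) (x : X) : ℝ≥0∞ :=
  ∑ Q' ∈ T with Q' ⊆ R, Q'.indicator (fun _ => γ Q') x

def goodSet (T : Finset (Set X)) (γ : Set X → ℝ≥0∞) (s : ℝ≥0∞) (R : Set X) : Set X :=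
  R \ {x | s < localSum T γ R x}

theorem sum_indicator_goodSet_le (h𝒟 : IsLaminar 𝒟) {T : Finset (Set X)} (hT : ∀ Q' ∈ T, Q' ∈ 𝒟)
    (x : X) : ∑ Q' ∈ T, (goodSet T γ s Q').indicator (fun _ => γ Q') x ≤ s := by
  rw [Finset.sum_indicator_eq_sum_filter]
  set S := T.filter fun Q' => x ∈ goodSet T γ s Q'
  obtain hS | hS := S.eq_empty_or_nonempty
  · simp [hS]
  -- every good set through `x` lies in a maximal one, `m`, and `x ∈ goodSet T γ s m`
  obtain ⟨m, hmax⟩ := S.exists_maximal hS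
  obtain ⟨hmT, hxm⟩ := Finset.mem_filter.1 hmax.1
  have hsub : S ⊆ (T.filter fun Q' => Q' ⊆ m).filter fun Q' => x ∈ Q' := by
    intro Q' hQ'
    obtain ⟨hQ'T, hxQ'⟩ := Finset.mem_filter.1 hQ'
    refine Finset.mem_filter.2 ⟨Finset.mem_filter.2 ⟨hQ'T, ?_⟩, hxQ'.1⟩
    rcases h𝒟 Q' (hT Q' hQ'T) m (hT m hmT) with hQ'm | hmQ' | hdisj
    · exact hQ'm
    · exact hmax.2 hQ' hmQ'
    · exact (hdisj.notMem_of_mem_left hxQ'.1 hxm.1).elim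
  calc ∑ Q' ∈ S, γ Q' ≤ ∑ Q' ∈ (T.filter fun Q' => Q' ⊆ m).filter fun Q' => x ∈ Q', γ Q' :=
        Finset.sum_le_sum_of_subset hsub
    _ = localSum T γ m x := by
        rw [localSum, Finset.sum_indicator_eq_sum_filter (g := fun _ => x)]
    _ ≤ s := not_lt.1 hxm.2

end LocalSum

noncomputable section Carleson

open scoped Classical

variable {X : Type*} [MeasurableSpace X] {𝒟 : Set (Set X)} {μ ν ρ : Measure X}
  {γ : Set X → ℝ≥0∞} {α β s : ℝ≥0∞}

/-- The discrete Carleson norm `⦀γ⦀_ρ`. -/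
def carlesonNorm (𝒟 : Set (Set X)) (ρ : Measure X) (γ : Set X → ℝ≥0∞) : ℝ≥0∞ :=
  ⨆ Q ∈ 𝒟, (∑' Q' : {Q' // Q' ∈ 𝒟 ∧ Q' ⊆ Q}, γ Q'.1 * ρ Q'.1) / ρ Q

def AInftyCondition (𝒟 : Set (Set X)) (μ ν : Measure X) (α β : ℝ≥0∞) : Prop :=
  ∀ Q ∈ 𝒟, ∀ F ⊆ Q, MeasurableSet F → α < μ F / μ Q → β ≤ ν F / ν Q

theorem measure_sdiff_div_self {Q F : Set X} (hF : MeasurableSet F) (hFQ : F ⊆ Q)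
    (hQ : 0 < ρ Q ∧ ρ Q < ⊤) : ρ (Q \ F) / ρ Q = 1 - ρ F / ρ Q := by
  rw [measure_sdiff hFQ hF.nullMeasurableSet (measure_ne_top_of_subset hFQ hQ.2.ne),
    ENNReal.sub_div fun _ _ => hQ.1.ne', ENNReal.div_self hQ.1.ne' hQ.2.ne]

theorem AInftyCondition.symm (h𝒟 : ∀ Q ∈ 𝒟, MeasurableSet Q)
    (hμ : ∀ Q ∈ 𝒟, 0 < μ Q ∧ μ Q < ⊤) (hν : ∀ Q ∈ 𝒟, 0 < ν Q ∧ ν Q < ⊤)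
    (h : AInftyCondition 𝒟 μ ν α β) : AInftyCondition 𝒟 ν μ (1 - β) (1 - α) := by
  intro Q hQ F hFQ hF hνF
  by_contra! hμF
  have hβ := h Q hQ (Q \ F) sdiff_subset ((h𝒟 Q hQ).diff hF) <| by
    rw [measure_sdiff_div_self hF hFQ (hμ Q hQ)]
    exact lt_tsub_comm.1 hμF
  rw [measure_sdiff_div_self hF hFQ (hν Q hQ)] at hβ
  have hνF_le : ν F / ν Q ≤ 1 := ENNReal.div_le_of_le_mul (by rw [one_mul]; exact measure_mono hFQ)
  exact hβ.not_gt (ENNReal.sub_lt_of_sub_lt hνF_le (Or.inl ENNReal.one_ne_top) hνF)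

theorem sum_le_carlesonNorm_mul {R : Set X} (hR : R ∈ 𝒟) (hρR : 0 < ρ R ∧ ρ R < ⊤)
    {T : Finset (Set X)} (hT : ∀ Q' ∈ T, Q' ∈ 𝒟 ∧ Q' ⊆ R) :
    ∑ Q' ∈ T, γ Q' * ρ Q' ≤ carlesonNorm 𝒟 ρ γ * ρ R := by
  calc ∑ Q' ∈ T, γ Q' * ρ Q'
      = ∑ Q' ∈ T.subtype (fun Q' => Q' ∈ 𝒟 ∧ Q' ⊆ R), γ Q'.1 * ρ Q'.1 :=
        (Finset.sum_subtype_of_mem (fun Q' => γ Q' * ρ Q') hT).symm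
    _ ≤ ∑' Q' : {Q' // Q' ∈ 𝒟 ∧ Q' ⊆ R}, γ Q'.1 * ρ Q'.1 := ENNReal.sum_le_tsum _
    _ ≤ carlesonNorm 𝒟 ρ γ * ρ R := (ENNReal.div_le_iff hρR.1.ne' hρR.2.ne).1 <|
        le_iSup₂ (f := fun R (_ : R ∈ 𝒟) =>
          (∑' Q' : {Q' // Q' ∈ 𝒟 ∧ Q' ⊆ R}, γ Q'.1 * ρ Q'.1) / ρ R) R hR

theorem lintegral_finsetSum_indicator_const {ι : Type*} (T : Finset ι) {S : ι → Set X}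
    (hS : ∀ i ∈ T, MeasurableSet (S i)) (c : ι → ℝ≥0∞) :
    ∫⁻ x, ∑ i ∈ T, (S i).indicator (fun _ => c i) x ∂ρ = ∑ i ∈ T, c i * ρ (S i) := by
  rw [lintegral_finsetSum _ fun i hi => measurable_const.indicator (hS i hi)]
  exact Finset.sum_congr rfl fun i hi => lintegral_indicator_const (hS i hi) _

theorem measurable_localSum {T : Finset (Set X)} (hT : ∀ Q' ∈ T, MeasurableSet Q') (R : Set X) :
    Measurable (localSum T γ R) :=
  Finset.measurable_sum _ fun Q' hQ' =>
    measurable_const.indicator (hT Q' (Finset.mem_filter.1 hQ').1)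

theorem lintegral_localSum {T : Finset (Set X)} (hT : ∀ Q' ∈ T, MeasurableSet Q') (R : Set X) :
    ∫⁻ x, localSum T γ R x ∂ρ = ∑ Q' ∈ T with Q' ⊆ R, γ Q' * ρ Q' :=
  lintegral_finsetSum_indicator_const _ (fun Q' hQ' => hT Q' (Finset.mem_filter.1 hQ').1) γ

theorem measurableSet_goodSet {T : Finset (Set X)} (hT : ∀ Q' ∈ T, MeasurableSet Q') {R : Set X}
    (hR : MeasurableSet R) : MeasurableSet (goodSet T γ s R) :=
  hR.diff (measurableSet_lt measurable_const (measurable_localSum hT R))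

theorem lt_measure_goodSet_div (h𝒟 : ∀ Q ∈ 𝒟, MeasurableSet Q) {T : Finset (Set X)}
    (hT : ∀ Q' ∈ T, Q' ∈ 𝒟) {R : Set X} (hR : R ∈ 𝒟) (hμR : 0 < μ R ∧ μ R < ⊤) (hs : s ≠ ⊤)
    (hMs : carlesonNorm 𝒟 μ γ < (1 - α) * s) :
    α < μ (goodSet T γ s R) / μ R := by
  have hTm : ∀ Q' ∈ T, MeasurableSet Q' := fun Q' hQ' => h𝒟 Q' (hT Q' hQ')
  have hs0 : s ≠ 0 := by rintro rfl; simp at hMs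
  have hbad : μ (R ∩ {x | s < localSum T γ R x}) < (1 - α) * μ R := by
    calc μ (R ∩ {x | s < localSum T γ R x})
        ≤ μ {x | s ≤ localSum T γ R x} := measure_mono fun _ hx => (show s < _ from hx.2).le
      _ ≤ (∫⁻ x, localSum T γ R x ∂μ) / s :=
        meas_ge_le_lintegral_div (measurable_localSum hTm R).aemeasurable hs0 hs
      _ ≤ carlesonNorm 𝒟 μ γ * μ R / s := by
        rw [lintegral_localSum hTm]
        gcongr
        exact sum_le_carlesonNorm_mul hR hμR fun Q' hQ' =>
          ⟨hT Q' (Finset.mem_filter.1 hQ').1, (Finset.mem_filter.1 hQ').2⟩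
      _ < (1 - α) * μ R := by
        rw [ENNReal.div_lt_iff (Or.inl hs0) (Or.inl hs), mul_right_comm]
        exact ENNReal.mul_lt_mul_left hμR.1.ne' hμR.2.ne hMs
  rw [goodSet, ← sdiff_self_inter, measure_sdiff_div_self ((h𝒟 R hR).inter
    (measurableSet_lt measurable_const (measurable_localSum hTm R))) inter_subset_left hμR]
  exact lt_tsub_comm.1 ((ENNReal.div_lt_iff (Or.inl hμR.1.ne') (Or.inl hμR.2.ne)).2 hbad)


theorem mul_sum_le_of_carlesonNorm_lt (h𝒟 : ∀ Q ∈ 𝒟, MeasurableSet Q) (hlam : IsLaminar 𝒟)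
    (hμ : ∀ Q ∈ 𝒟, 0 < μ Q ∧ μ Q < ⊤) (hν : ∀ Q ∈ 𝒟, 0 < ν Q ∧ ν Q < ⊤)
    (hA : AInftyCondition 𝒟 μ ν α β) {Q : Set X} {T : Finset (Set X)}
    (hT : ∀ Q' ∈ T, Q' ∈ 𝒟 ∧ Q' ⊆ Q) (hs : s ≠ ⊤) (hMs : carlesonNorm 𝒟 μ γ < (1 - α) * s) :
    β * ∑ Q' ∈ T, γ Q' * ν Q' ≤ s * ν Q := by
  have hT𝒟 : ∀ Q' ∈ T, Q' ∈ 𝒟 := fun Q' hQ' => (hT Q' hQ').1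
  have hgood_meas : ∀ Q' ∈ T, MeasurableSet (goodSet T γ s Q') := fun Q' hQ' =>
    measurableSet_goodSet (fun R hR => h𝒟 R (hT𝒟 R hR)) (h𝒟 Q' (hT𝒟 Q' hQ'))
  have hgood_subset : ∀ Q' ∈ T, goodSet T γ s Q' ⊆ Q := fun Q' hQ' =>
    sdiff_subset.trans (hT Q' hQ').2
  have hgood_large : ∀ Q' ∈ T, β * ν Q' ≤ ν (goodSet T γ s Q') := fun Q' hQ' => by
    have hQ'𝒟 := hT𝒟 Q' hQ'
    have := hA Q' hQ'𝒟 _ sdiff_subset (hgood_meas Q' hQ')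
      (lt_measure_goodSet_div h𝒟 hT𝒟 hQ'𝒟 (hμ Q' hQ'𝒟) hs hMs)
    exact (ENNReal.le_div_iff_mul_le (Or.inl (hν Q' hQ'𝒟).1.ne')
      (Or.inl (hν Q' hQ'𝒟).2.ne)).1 this
  calc β * ∑ Q' ∈ T, γ Q' * ν Q'
      = ∑ Q' ∈ T, γ Q' * (β * ν Q') := by
        rw [Finset.mul_sum]
        exact Finset.sum_congr rfl fun _ _ => mul_left_comm _ _ _
    _ ≤ ∑ Q' ∈ T, γ Q' * ν (goodSet T γ s Q') := by
        gcongr with Q' hQ'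
        exact hgood_large Q' hQ'
    _ = ∑ Q' ∈ T, γ Q' * ν.restrict Q (goodSet T γ s Q') :=
        Finset.sum_congr rfl fun Q' hQ' => by rw [Measure.restrict_eq_self _ (hgood_subset Q' hQ')]
    _ = ∫⁻ x, ∑ Q' ∈ T, (goodSet T γ s Q').indicator (fun _ => γ Q') x ∂ν.restrict Q :=
        (lintegral_finsetSum_indicator_const T hgood_meas γ).symm
    _ ≤ ∫⁻ _, s ∂ν.restrict Q := lintegral_mono fun x => sum_indicator_goodSet_le hlam hT𝒟 x
    _ = s * ν Q := by rw [lintegral_const, Measure.restrict_apply_univ]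

theorem carlesonNorm_le_div (hα : α < 1) (hβ0 : β ≠ 0) (hβ_top : β ≠ ⊤)
    (h𝒟 : ∀ Q ∈ 𝒟, MeasurableSet Q) (hlam : IsLaminar 𝒟)
    (hμ : ∀ Q ∈ 𝒟, 0 < μ Q ∧ μ Q < ⊤) (hν : ∀ Q ∈ 𝒟, 0 < ν Q ∧ ν Q < ⊤)
    (hA : AInftyCondition 𝒟 μ ν α β) (γ : Set X → ℝ≥0∞) :
    carlesonNorm 𝒟 ν γ ≤ carlesonNorm 𝒟 μ γ / ((1 - α) * β) := by
  have hαβ : (1 - α) * β ≠ 0 := mul_ne_zero (tsub_pos_of_lt hα).ne' hβ0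
  refine iSup₂_le fun Q hQ => ?_
  rw [ENNReal.tsum_eq_iSup_sum, ENNReal.iSup_div]
  refine iSup_le fun T => le_of_forall_gt_imp_ge_of_dense fun t ht => ?_
  obtain rfl | ht_top := eq_or_ne t ⊤
  · exact le_top
  have hMt : carlesonNorm 𝒟 μ γ < (1 - α) * (β * t) := by
    have := (ENNReal.div_lt_iff (Or.inl hαβ)
      (Or.inl (ENNReal.mul_ne_top (ENNReal.sub_ne_top ENNReal.one_ne_top) hβ_top))).1 ht
    rwa [mul_comm t, mul_assoc] at this
  have key := mul_sum_le_of_carlesonNorm_lt h𝒟 hlam hμ hν hA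
    (T := T.map (Function.Embedding.subtype _)) (fun Q' hQ' => by
      obtain ⟨Q'', -, rfl⟩ := Finset.mem_map.1 hQ'
      exact Q''.2) (ENNReal.mul_ne_top hβ_top ht_top) hMt
  rw [Finset.sum_map, mul_assoc, ENNReal.mul_le_mul_iff_right hβ0 hβ_top] at key
  exact (ENNReal.div_le_iff (hν Q hQ).1.ne' (hν Q hQ).2.ne).2 key

theorem mul_carlesonNorm_le (hα : α < 1) (hβ0 : β ≠ 0) (hβ1 : β ≤ 1)
    (h𝒟 : ∀ Q ∈ 𝒟, MeasurableSet Q) (hlam : IsLaminar 𝒟)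
    (hμ : ∀ Q ∈ 𝒟, 0 < μ Q ∧ μ Q < ⊤) (hν : ∀ Q ∈ 𝒟, 0 < ν Q ∧ ν Q < ⊤)
    (hA : AInftyCondition 𝒟 μ ν α β) (γ : Set X → ℝ≥0∞) :
    (1 - α) * β * carlesonNorm 𝒟 μ γ ≤ carlesonNorm 𝒟 ν γ := by
  have h := carlesonNorm_le_div (ENNReal.sub_lt_self ENNReal.one_ne_top one_ne_zero hβ0)
    (tsub_pos_of_lt hα).ne' (ENNReal.sub_ne_top ENNReal.one_ne_top) h𝒟 hlam hν hμ
    (hA.symm h𝒟 hμ hν) γ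
  rw [ENNReal.sub_sub_cancel ENNReal.one_ne_top hβ1, mul_comm β] at h
  calc (1 - α) * β * carlesonNorm 𝒟 μ γ
      ≤ (1 - α) * β * (carlesonNorm 𝒟 ν γ / ((1 - α) * β)) := by gcongr
    _ ≤ carlesonNorm 𝒟 ν γ := ENNReal.mul_div_le

end Carleson

theorem carleson_norm_comparison_general {n : ℕ}
    (E : Set (EuclideanSpace ℝ (Fin (n + 1)))) (D : DyadicGrid E)
    (Q0 : Set (EuclideanSpace ℝ (Fin (n + 1))))
    (DQ0 : Set (Set (EuclideanSpace ℝ (Fin (n + 1)))))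
    (hQ0 : IsLocalizedFamily D Q0 DQ0)
    (μ ν : Measure (EuclideanSpace ℝ (Fin (n + 1))))
    (hμ : ∀ Q ∈ DQ0, 0 < μ Q ∧ μ Q < ⊤)
    (hν : ∀ Q ∈ DQ0, 0 < ν Q ∧ ν Q < ⊤)
    (a b : ℝ) (ha0 : 0 < a) (ha1 : a < 1) (hb0 : 0 < b) (hb1 : b < 1)
    (hab : ∀ Q ∈ DQ0, ∀ F ⊆ Q, MeasurableSet F →
      ENNReal.ofReal a < μ F / μ Q → ENNReal.ofReal b ≤ ν F / ν Q)
    (γ : Set (EuclideanSpace ℝ (Fin (n + 1))) → ℝ) :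
    ENNReal.ofReal ((1 - a) * b) *
        (⨆ Q ∈ DQ0,
          (∑' Q' : {Q' // Q' ∈ DQ0 ∧ Q' ⊆ Q}, ENNReal.ofReal (γ Q'.1) * μ Q'.1) / μ Q) ≤
      (⨆ Q ∈ DQ0,
        (∑' Q' : {Q' // Q' ∈ DQ0 ∧ Q' ⊆ Q}, ENNReal.ofReal (γ Q'.1) * ν Q'.1) / ν Q) ∧
    (⨆ Q ∈ DQ0,
        (∑' Q' : {Q' // Q' ∈ DQ0 ∧ Q' ⊆ Q}, ENNReal.ofReal (γ Q'.1) * ν Q'.1) / ν Q) ≤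
      (⨆ Q ∈ DQ0,
        (∑' Q' : {Q' // Q' ∈ DQ0 ∧ Q' ⊆ Q}, ENNReal.ofReal (γ Q'.1) * μ Q'.1) / μ Q) /
        ENNReal.ofReal ((1 - a) * b) := by
  have hmeas : ∀ Q ∈ DQ0, MeasurableSet Q := fun Q hQ =>
    D.measurableSet_of_mem_iUnion (hQ0.subset_iUnion_cubes hQ)
  have hlam : IsLaminar DQ0 := D.isLaminar.mono hQ0.subset_iUnion_cubes
  have hα : ENNReal.ofReal a < 1 := ENNReal.ofReal_lt_one.2 ha1
  have hβ0 : ENNReal.ofReal b ≠ 0 := (ENNReal.ofReal_pos.2 hb0).ne'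
  have hβ1 : ENNReal.ofReal b ≤ 1 := ENNReal.ofReal_le_one.2 hb1.le
  have hconst : ENNReal.ofReal ((1 - a) * b) = (1 - ENNReal.ofReal a) * ENNReal.ofReal b := by
    rw [ENNReal.ofReal_mul (by linarith), ENNReal.ofReal_sub _ ha0.le, ENNReal.ofReal_one]
  rw [hconst]
  exact ⟨mul_carlesonNorm_le hα hβ0 hβ1 hmeas hlam hμ hν hab fun Q => ENNReal.ofReal (γ Q),
    carlesonNorm_le_div hα hβ0 (ne_top_of_le_ne_top ENNReal.one_ne_top hβ1) hmeas hlam hμ hν hab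
      fun Q => ENNReal.ofReal (γ Q)⟩

/-- **Comparison of discrete Carleson norms with respect to comparable measures**
(Lemma `lemma:Carleson-mu-nu` of the paper).  If `μ, ν` are finite and positive on
the cubes of `𝔻_{Q⁰}` and satisfy the `A∞`-type condition
`μ(F)/μ(Q) > α ⟹ ν(F)/ν(Q) ≥ β`, then for any sequence `γ` of nonnegative numbers,
`(1-α)β ⦀γ⦀_μ ≤ ⦀γ⦀_ν ≤ ((1-α)β)⁻¹ ⦀γ⦀_μ`, where
`⦀γ⦀_ρ := sup_{Q ∈ 𝔻_{Q⁰}} ρ(Q)⁻¹ ∑_{Q' ∈ 𝔻_Q} γ_{Q'} ρ(Q')`. -/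
theorem carleson_norm_comparison {n : ℕ}
    (E : Set (EuclideanSpace ℝ (Fin (n + 1)))) (D : DyadicGrid E)
    (Q0 : Set (EuclideanSpace ℝ (Fin (n + 1))))
    (DQ0 : Set (Set (EuclideanSpace ℝ (Fin (n + 1)))))
    (hQ0 : IsLocalizedFamily D Q0 DQ0)
    (μ ν : Measure (EuclideanSpace ℝ (Fin (n + 1))))
    (hμ : ∀ Q ∈ DQ0, 0 < μ Q ∧ μ Q < ⊤)
    (hν : ∀ Q ∈ DQ0, 0 < ν Q ∧ ν Q < ⊤)
    (a b : ℝ) (ha0 : 0 < a) (ha1 : a < 1) (hb0 : 0 < b) (hb1 : b < 1)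
    (hab : ∀ Q ∈ DQ0, ∀ F ⊆ Q, MeasurableSet F →
      ENNReal.ofReal a < μ F / μ Q → ENNReal.ofReal b ≤ ν F / ν Q)
    (γ : Set (EuclideanSpace ℝ (Fin (n + 1))) → ℝ) (hγ : ∀ Q ∈ DQ0, 0 ≤ γ Q) :
    ENNReal.ofReal ((1 - a) * b) *
        (⨆ Q ∈ DQ0,
          (∑' Q' : {Q' // Q' ∈ DQ0 ∧ Q' ⊆ Q}, ENNReal.ofReal (γ Q'.1) * μ Q'.1) / μ Q) ≤
      (⨆ Q ∈ DQ0,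
        (∑' Q' : {Q' // Q' ∈ DQ0 ∧ Q' ⊆ Q}, ENNReal.ofReal (γ Q'.1) * ν Q'.1) / ν Q) ∧
    (⨆ Q ∈ DQ0,
        (∑' Q' : {Q' // Q' ∈ DQ0 ∧ Q' ⊆ Q}, ENNReal.ofReal (γ Q'.1) * ν Q'.1) / ν Q) ≤
      (⨆ Q ∈ DQ0,
        (∑' Q' : {Q' // Q' ∈ DQ0 ∧ Q' ⊆ Q}, ENNReal.ofReal (γ Q'.1) * μ Q'.1) / μ Q) /
        ENNReal.ofReal ((1 - a) * b) :=
  carleson_norm_comparison_general E D Q0 DQ0 hQ0 μ ν hμ hν a b ha0 ha1 hb0 hb1 hab γ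
end

section
/- Let E ⊆ ℝ^{n+1}, let 𝔻 = ⋃_{k∈ℤ} 𝔻_k be a dyadic grid on E, and fix a cube Q₀ ∈ 𝔻. Let μ and ν be nonnegative Borel measures on Q₀ with 0 < μ(Q) < ∞ and 0 < ν(Q) < ∞ for every Q ∈ 𝔻_{Q₀}. Suppose there exist constants q > 1 and C₁, C₂, C₃ ≥ 1 such that for every Q ∈ 𝔻_{Q₀} there is a Borel subset E_Q ⊆ Q with μ(Q) ≤ C₂ μ(E_Q), ν(Q) ≤ C₃ ν(E_Q), and ν(F)/ν(E_Q) ≤ C₁ (μ(F)/μ(E_Q))^{1/q} for every Borel set F ⊆ E_Q. Then there exist constants 0 < α, β < 1, depending only on q, C₁, C₂, C₃, such that for every Q ∈ 𝔻_{Q₀} and every Borel set F ⊆ Q, μ(F)/μ(Q) > α implies ν(F)/ν(Q) > β. -/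
/-!
The criterion is proved cube by cube. If `μ(F) > (1 - ε) μ(Q)`, then `E_Q \ F` has
`μ`-density at most `ε C₂` in `E_Q`, so by the reverse Hölder bound its `ν`-density in `E_Q`
is at most `C₁ (ε C₂)^{1/q}`, which equals `1/2` for `ε = (2 C₁)^{-q} / C₂`. Hence
`ν(F) ≥ ν(E_Q) / 2 ≥ ν(Q) / (2 C₃)`.
-/

open Metric MeasureTheory
open scoped ENNReal

namespace MeasureTheory

variable {X : Type*} [MeasurableSpace X] {μ ν : Measure X} {Q E F : Set X}

lemma measure_sdiff_lt_mul_of_one_sub_lt_div {ε : ℝ≥0∞} (hε : ε ≤ 1)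
    (hF : NullMeasurableSet F μ) (hFQ : F ⊆ Q) (hQ : μ Q ≠ ∞) (h : 1 - ε < μ F / μ Q) :
    μ (Q \ F) < ε * μ Q := by
  refine measure_sdiff_lt_of_lt_add hF hFQ (ne_top_of_le_ne_top hQ (measure_mono hFQ)) ?_
  have hlt : (1 - ε) * μ Q < μ F :=
    (ENNReal.lt_div_iff_mul_lt (Or.inr (by simp)) (Or.inl hQ)).1 h
  calc μ Q = (1 - ε) * μ Q + ε * μ Q := by rw [← add_mul, tsub_add_cancel_of_le hε, one_mul]
    _ < μ F + ε * μ Q :=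
      ENNReal.add_lt_add_right
        (ENNReal.mul_ne_top (ne_top_of_le_ne_top ENNReal.one_ne_top hε) hQ) hlt

lemma measure_le_two_mul_of_measure_sdiff_le_half (hE : ν E ≠ ∞)
    (h : ν (E \ F) ≤ 2⁻¹ * ν E) : ν E ≤ 2 * ν F := by
  have hhalf : 2⁻¹ * ν E ≤ ν F := by
    refine (ENNReal.add_le_add_iff_left
      (ENNReal.mul_ne_top (ENNReal.inv_ne_top.2 two_ne_zero) hE)).1 ?_
    calc 2⁻¹ * ν E + 2⁻¹ * ν E = ν E := by rw [← add_mul, ENNReal.inv_two_add_inv_two, one_mul]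
      _ ≤ ν (E \ F) + ν (E ∩ F) := by rw [add_comm]; exact measure_le_inter_add_sdiff ν E F
      _ ≤ 2⁻¹ * ν E + ν F := add_le_add h (measure_mono Set.inter_subset_right)
  calc ν E = 2 * (2⁻¹ * ν E) := by
        rw [← mul_assoc, ENNReal.mul_inv_cancel two_ne_zero ENNReal.ofNat_ne_top, one_mul]
    _ ≤ 2 * ν F := by gcongr

lemma measure_le_two_mul_mul_of_reverse_holder {c₁ c₂ c₃ ε : ℝ≥0∞} {p : ℝ} (hp : 0 ≤ p)
    (hε : ε ≤ 1) (hconst : c₁ * (ε * c₂) ^ p ≤ 2⁻¹) (hQμ : μ Q ≠ ∞) (hQν : ν Q ≠ ∞)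
    (hEQ : E ⊆ Q) (hF : NullMeasurableSet F μ) (hFQ : F ⊆ Q)
    (hμE : μ Q ≤ c₂ * μ E) (hνE : ν Q ≤ c₃ * ν E)
    (hH : ν (E \ F) / ν E ≤ c₁ * (μ (E \ F) / μ E) ^ p) (hμF : 1 - ε < μ F / μ Q) :
    ν Q ≤ 2 * c₃ * ν F := by
  have hμ : μ (E \ F) / μ E ≤ ε * c₂ := ENNReal.div_le_of_le_mul <| calc
    μ (E \ F) ≤ μ (Q \ F) := measure_mono (Set.sdiff_subset_sdiff_left hEQ)
    _ ≤ ε * μ Q := (measure_sdiff_lt_mul_of_one_sub_lt_div hε hF hFQ hQμ hμF).le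
    _ ≤ ε * (c₂ * μ E) := by gcongr
    _ = ε * c₂ * μ E := (mul_assoc _ _ _).symm
  have hν : ν (E \ F) ≤ 2⁻¹ * ν E :=
    (ENNReal.div_le_iff_le_mul (Or.inr (ENNReal.inv_ne_top.2 two_ne_zero))
      (Or.inr (ENNReal.inv_ne_zero.2 ENNReal.ofNat_ne_top))).1 <|
      hH.trans <| le_trans (by gcongr) hconst
  calc ν Q ≤ c₃ * ν E := hνE
    _ ≤ c₃ * (2 * ν F) := by
      gcongr
      exact measure_le_two_mul_of_measure_sdiff_le_half
        (ne_top_of_le_ne_top hQν (measure_mono hEQ)) hν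
    _ = 2 * c₃ * ν F := by ring

end MeasureTheory

lemma ENNReal.inv_le_div_of_le_mul {a b c : ℝ≥0∞} (hb₀ : b ≠ 0) (hb : b ≠ ∞) (hc₀ : c ≠ 0)
    (hc : c ≠ ∞) (h : b ≤ c * a) : c⁻¹ ≤ a / b := by
  rwa [ENNReal.le_div_iff_mul_le (Or.inl hb₀) (Or.inl hb), ENNReal.inv_mul_le_iff hc₀ hc]

lemma ENNReal.ofReal_mul_ofReal_rpow_neg_rpow_one_div {C q : ℝ} (hC : 0 < C) (hq : q ≠ 0) :
    ENNReal.ofReal C * ENNReal.ofReal ((2 * C) ^ (-q)) ^ (1 / q) = 2⁻¹ := by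
  have h2C : 0 < 2 * C := by positivity
  rw [ENNReal.ofReal_rpow_of_pos (Real.rpow_pos_of_pos h2C _), ← Real.rpow_mul h2C.le,
    neg_mul, mul_one_div_cancel hq, Real.rpow_neg_one, ← ENNReal.ofReal_mul hC.le,
    show C * (2 * C)⁻¹ = 2⁻¹ by field_simp, ENNReal.ofReal_inv_of_pos two_pos,
    ENNReal.ofReal_ofNat]

/-- **Abstract `A∞`-type criterion** (the abstract form of the argument in Step 1
of the proof of the paper's local perturbation result).  Suppose that for every
`Q ∈ 𝔻_{Q₀}` there is a Borel subset `E_Q ⊆ Q` with `μ(Q) ≤ C₂ μ(E_Q)`,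
`ν(Q) ≤ C₃ ν(E_Q)`, and `ν(F)/ν(E_Q) ≤ C₁ (μ(F)/μ(E_Q))^{1/q}` for every Borel
`F ⊆ E_Q`.  Then there are `0 < α, β < 1`, depending only on `q, C₁, C₂, C₃`, such
that for every `Q ∈ 𝔻_{Q₀}` and Borel `F ⊆ Q`, `μ(F)/μ(Q) > α` implies
`ν(F)/ν(Q) > β`. -/
theorem abstract_Ainfty_criterion (q C₁ C₂ C₃ : ℝ)
    (hq : 1 < q) (hC₁ : 1 ≤ C₁) (hC₂ : 1 ≤ C₂) (hC₃ : 1 ≤ C₃) :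
    ∃ a b : ℝ, 0 < a ∧ a < 1 ∧ 0 < b ∧ b < 1 ∧
      ∀ (n : ℕ) (E : Set (EuclideanSpace ℝ (Fin (n + 1)))) (D : DyadicGrid E)
        (Q₀ : Set (EuclideanSpace ℝ (Fin (n + 1))))
        (DQ0 : Set (Set (EuclideanSpace ℝ (Fin (n + 1))))),
        -- `Q₀` is a cube of the grid and `DQ0 = 𝔻_{Q₀}`
        (∃ k0 : ℤ, Q₀ ∈ D.cubes k0 ∧
          DQ0 = {Q | ∃ k : ℤ, k0 ≤ k ∧ Q ∈ D.cubes k ∧ Q ⊆ Q₀}) →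
      ∀ μ ν : Measure (EuclideanSpace ℝ (Fin (n + 1))),
        (∀ Q ∈ DQ0, 0 < μ Q ∧ μ Q < ⊤) →
        (∀ Q ∈ DQ0, 0 < ν Q ∧ ν Q < ⊤) →
        (∀ Q ∈ DQ0, ∃ EQ : Set (EuclideanSpace ℝ (Fin (n + 1))),
          MeasurableSet EQ ∧ EQ ⊆ Q ∧
          μ Q ≤ ENNReal.ofReal C₂ * μ EQ ∧
          ν Q ≤ ENNReal.ofReal C₃ * ν EQ ∧
          ∀ F ⊆ EQ, MeasurableSet F →
            ν F / ν EQ ≤ ENNReal.ofReal C₁ * (μ F / μ EQ) ^ (1 / q)) →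
        ∀ Q ∈ DQ0, ∀ F ⊆ Q, MeasurableSet F →
          ENNReal.ofReal a < μ F / μ Q → ENNReal.ofReal b < ν F / ν Q := by
  have hC₁0 : 0 < C₁ := by linarith
  have hC₂0 : 0 < C₂ := by linarith
  set ε : ℝ := (2 * C₁) ^ (-q) / C₂
  have hε0 : 0 < ε := by positivity
  have hε1 : ε < 1 := (div_le_self (by positivity) hC₂).trans_lt
    (Real.rpow_lt_one_of_one_lt_of_neg (by linarith) (by linarith))
  have hconst : ENNReal.ofReal C₁ * (ENNReal.ofReal ε * ENNReal.ofReal C₂) ^ (1 / q) ≤ 2⁻¹ := by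
    rw [← ENNReal.ofReal_mul hε0.le, div_mul_cancel₀ _ hC₂0.ne',
      ENNReal.ofReal_mul_ofReal_rpow_neg_rpow_one_div hC₁0 (by linarith)]
  refine ⟨1 - ε, (4 * C₃)⁻¹, by linarith, by linarith, by positivity,
    inv_lt_one_of_one_lt₀ (by linarith), ?_⟩
  rintro n E D Q₀ DQ0 - μ ν hμ hν hEQ Q hQ F hFQ hF hμF
  obtain ⟨EQ, hEm, hEQ, hμE, hνE, hH⟩ := hEQ Q hQ
  have hνQ := hν Q hQ
  have hνF : ν Q ≤ 2 * ENNReal.ofReal C₃ * ν F :=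
    measure_le_two_mul_mul_of_reverse_holder (by positivity) (ENNReal.ofReal_le_one.2 hε1.le)
      hconst (hμ Q hQ).2.ne hνQ.2.ne hEQ hF.nullMeasurableSet hFQ hμE hνE
      (hH _ Set.sdiff_subset (hEm.diff hF))
      (by rwa [ENNReal.ofReal_sub 1 hε0.le, ENNReal.ofReal_one] at hμF)
  calc ENNReal.ofReal (4 * C₃)⁻¹ < ENNReal.ofReal (2 * C₃)⁻¹ := by
        rw [ENNReal.ofReal_lt_ofReal_iff (by positivity)]
        exact inv_strictAnti₀ (by positivity) (by linarith)
    _ = (2 * ENNReal.ofReal C₃)⁻¹ := by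
        rw [ENNReal.ofReal_inv_of_pos (by positivity), ENNReal.ofReal_mul zero_le_two,
          ENNReal.ofReal_ofNat]
    _ ≤ ν F / ν Q := ENNReal.inv_le_div_of_le_mul hνQ.1.ne' hνQ.2.ne
        (mul_ne_zero two_ne_zero (ENNReal.ofReal_pos.2 (by linarith)).ne')
        (ENNReal.mul_ne_top ENNReal.ofNat_ne_top ENNReal.ofReal_ne_top) hνF
end

section
/- Let (X, 𝔄) be a measurable space and let σ, ω₀, ω be nonnegative σ-finite measures on X with ω ≪ ω₀ ≪ σ, and denote by dω₀/dσ, dω/dω₀ and dω/dσ the corresponding Radon–Nikodym derivatives. Let 1 < p < ∞ and 1 < q < ∞, and set r = pq/(p+q−1); then 1 < r < min{p, q}. Let Δ ∈ 𝔄 be a set with 0 < σ(Δ) < ∞, 0 < ω₀(Δ) < ∞ and 0 < ω(Δ) < ∞, and suppose there are constants C₀, C₁ ≥ 1 such that ((1/σ(Δ)) ∫_Δ (dω₀/dσ)^p dσ)^{1/p} ≤ C₀ ω₀(Δ)/σ(Δ) and ((1/ω₀(Δ)) ∫_Δ (dω/dω₀)^q dω₀)^{1/q} ≤ C₁ ω(Δ)/ω₀(Δ).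 Then ((1/σ(Δ)) ∫_Δ (dω/dσ)^r dσ)^{1/r} ≤ C₁ C₀^{1/q'} ω(Δ)/σ(Δ), where q' = q/(q−1) is the Hölder conjugate of q. In particular, if the two reverse Hölder inequalities hold uniformly over a family of sets Δ (e.g. all surface balls), then the r-reverse Hölder inequality for dω/dσ holds uniformly over the same family with constant C₁ C₀^{1/q'}. -/
/-!
With `f = dω/dω₀` and `g = dω₀/dσ`, the chain rule gives `dω/dσ = f g` σ-a.e. The relation
`r (p + q - 1) = p q` is exactly what makes `(f g)^r = (f^q g)^(r/q) (g^p)^(1 - r/q)`, so Hölder's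
inequality with the exponents `r/q` and `1 - r/q` bounds `∫_Δ (f g)^r dσ` by
`(∫_Δ f^q g dσ)^(r/q) (∫_Δ g^p dσ)^(1 - r/q)`, and `∫_Δ f^q g dσ = ∫_Δ f^q dω₀`. Inserting the two
reverse Hölder inequalities, the powers of `ω₀(Δ)/σ(Δ)` add up to exactly `r`, and this factor
cancels the `ω₀(Δ)` in the denominator of the second one.
-/

open MeasureTheory
open scoped ENNReal

section Exponents

variable {p q r : ℝ}

theorem mul_div_add_sub_one_mem_Ioo (hp : 1 < p) (hq : 1 < q) :
    p * q / (p + q - 1) ∈ Set.Ioo 1 (min p q) := by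
  have hd : 0 < p + q - 1 := by linarith
  refine ⟨?_, lt_min ?_ ?_⟩
  · rw [lt_div_iff₀ hd]; nlinarith
  · rw [div_lt_iff₀ hd]; nlinarith
  · rw [div_lt_iff₀ hd]; nlinarith

theorem mul_one_sub_div_of_eq_mul_div_add_sub_one (hq : q ≠ 0) (hpq : p + q - 1 ≠ 0)
    (hr : r = p * q / (p + q - 1)) : p * (1 - r / q) = r * (1 - 1 / q) := by
  subst hr
  field_simp
  ring

end Exponents

namespace ENNReal

theorem mul_rpow_mul_mul_rpow_one_sub (c x y : ℝ≥0∞) {α : ℝ} (h₀ : 0 ≤ α) (h₁ : α ≤ 1) :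
    (c * x) ^ α * (c * y) ^ (1 - α) = c * (x ^ α * y ^ (1 - α)) := by
  have h₁' : 0 ≤ 1 - α := sub_nonneg.2 h₁
  calc (c * x) ^ α * (c * y) ^ (1 - α) = c ^ (α + (1 - α)) * (x ^ α * y ^ (1 - α)) := by
        rw [mul_rpow_of_nonneg _ _ h₀, mul_rpow_of_nonneg _ _ h₁', rpow_add_of_nonneg _ _ h₀ h₁']
        ring
    _ = c * (x ^ α * y ^ (1 - α)) := by rw [add_sub_cancel, rpow_one]

variable {p q r : ℝ}

theorem mul_rpow_eq_rpow_div_mul_rpow_one_sub_div (a b : ℝ≥0∞) (hp : 0 ≤ p) (hq : 0 < q)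
    (hr : 0 ≤ r) (hrq : r ≤ q) (hpqr : p * (1 - r / q) = r * (1 - 1 / q)) :
    (a * b) ^ r = (a ^ q * b) ^ (r / q) * (b ^ p) ^ (1 - r / q) := by
  have hα : 0 ≤ r / q := div_nonneg hr hq.le
  have hβ : 0 ≤ p * (1 - r / q) := mul_nonneg hp (sub_nonneg.2 ((div_le_one hq).2 hrq))
  rw [mul_rpow_of_nonneg _ _ hα, ← rpow_mul, ← rpow_mul, mul_assoc, ← rpow_add_of_nonneg _ _ hα hβ,
    mul_div_cancel₀ r hq.ne', hpqr, mul_rpow_of_nonneg _ _ hr]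
  congr 2
  ring

theorem rpow_div_mul_rpow_one_sub_div_eq (t u c : ℝ≥0∞) (hp : 0 ≤ p) (hq : 0 < q)
    (hr : 0 ≤ r) (hrq : r ≤ q) (hpqr : p * (1 - r / q) = r * (1 - 1 / q)) :
    (t * u ^ q) ^ (r / q) * ((c * t) ^ p) ^ (1 - r / q) = (u * t * c ^ (1 - 1 / q)) ^ r := by
  have hβ : 0 ≤ 1 - r / q := sub_nonneg.2 ((div_le_one hq).2 hrq)
  calc (t * u ^ q) ^ (r / q) * ((c * t) ^ p) ^ (1 - r / q)
      = (u ^ q * t) ^ (r / q) * (t ^ p) ^ (1 - r / q) * c ^ (p * (1 - r / q)) := by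
        rw [mul_comm t, mul_rpow_of_nonneg c t hp, mul_rpow_of_nonneg _ _ hβ, rpow_mul]
        ring
    _ = (u * t) ^ r * (c ^ (1 - 1 / q)) ^ r := by
        rw [← mul_rpow_eq_rpow_div_mul_rpow_one_sub_div u t hp hq hr hrq hpqr, hpqr, mul_comm r,
          rpow_mul]
    _ = (u * t * c ^ (1 - 1 / q)) ^ r := (mul_rpow_of_nonneg _ _ hr).symm

end ENNReal

namespace MeasureTheory.Measure

variable {X : Type*} [MeasurableSpace X] {μ ν κ : Measure X} [SigmaFinite μ] [SigmaFinite ν]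
  [SigmaFinite κ] {p q r : ℝ}

theorem setLIntegral_rnDeriv_rpow_le (hμν : μ ≪ ν) (hνκ : ν ≪ κ) {s : Set X}
    (hs : MeasurableSet s) (hp : 0 ≤ p) (hq : 0 < q) (hr : 0 ≤ r) (hrq : r ≤ q)
    (hpqr : p * (1 - r / q) = r * (1 - 1 / q)) :
    ∫⁻ x in s, μ.rnDeriv κ x ^ r ∂κ ≤
      (∫⁻ x in s, μ.rnDeriv ν x ^ q ∂ν) ^ (r / q) *
        (∫⁻ x in s, ν.rnDeriv κ x ^ p ∂κ) ^ (1 - r / q) := by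
  have hf := (measurable_rnDeriv μ ν).pow_const q
  have hg := measurable_rnDeriv ν κ
  calc ∫⁻ x in s, μ.rnDeriv κ x ^ r ∂κ
      = ∫⁻ x in s, (μ.rnDeriv ν x ^ q * ν.rnDeriv κ x) ^ (r / q) *
          (ν.rnDeriv κ x ^ p) ^ (1 - r / q) ∂κ := by
        refine lintegral_congr_ae (ae_restrict_of_ae ?_)
        filter_upwards [rnDeriv_mul_rnDeriv (κ := κ) hμν] with x hx
        rw [← hx, Pi.mul_apply,
          ENNReal.mul_rpow_eq_rpow_div_mul_rpow_one_sub_div _ _ hp hq hr hrq hpqr]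
    _ ≤ (∫⁻ x in s, μ.rnDeriv ν x ^ q * ν.rnDeriv κ x ∂κ) ^ (r / q) *
          (∫⁻ x in s, ν.rnDeriv κ x ^ p ∂κ) ^ (1 - r / q) :=
        ENNReal.lintegral_mul_norm_pow_le (hf.mul hg).aemeasurable (hg.pow_const p).aemeasurable
          (div_nonneg hr hq.le) (sub_nonneg.2 ((div_le_one hq).2 hrq)) (add_sub_cancel _ _)
    _ = (∫⁻ x in s, μ.rnDeriv ν x ^ q ∂ν) ^ (r / q) *
          (∫⁻ x in s, ν.rnDeriv κ x ^ p ∂κ) ^ (1 - r / q) := by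
        simp_rw [mul_comm (μ.rnDeriv ν _ ^ q)]
        rw [setLIntegral_rnDeriv_mul hνκ hf.aemeasurable hs]

theorem inv_mul_setLIntegral_rnDeriv_rpow_le (hμν : μ ≪ ν) (hνκ : ν ≪ κ) {s : Set X}
    (hs : MeasurableSet s) (hνs₀ : ν s ≠ 0) (hνs : ν s ≠ ⊤) (hp : 0 ≤ p) (hq : 0 < q)
    (hr : 0 ≤ r) (hrq : r ≤ q) (hpqr : p * (1 - r / q) = r * (1 - 1 / q)) :
    (κ s)⁻¹ * ∫⁻ x in s, μ.rnDeriv κ x ^ r ∂κ ≤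
      (ν s / κ s * ((ν s)⁻¹ * ∫⁻ x in s, μ.rnDeriv ν x ^ q ∂ν)) ^ (r / q) *
        ((κ s)⁻¹ * ∫⁻ x in s, ν.rnDeriv κ x ^ p ∂κ) ^ (1 - r / q) := by
  rw [div_eq_mul_inv, mul_comm (ν s), mul_assoc, ENNReal.mul_inv_cancel_left hνs₀ hνs,
    ENNReal.mul_rpow_mul_mul_rpow_one_sub _ _ _ (div_nonneg hr hq.le) ((div_le_one hq).2 hrq)]
  gcongr
  exact setLIntegral_rnDeriv_rpow_le hμν hνκ hs hp hq hr hrq hpqr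

end MeasureTheory.Measure

theorem reverse_holder_composition_general {X : Type*} [MeasurableSpace X]
    (σ ω₀ ω : Measure X) [SigmaFinite σ] [SigmaFinite ω₀] [SigmaFinite ω]
    (hωω₀ : ω ≪ ω₀) (hω₀σ : ω₀ ≪ σ)
    (p q r q' : ℝ) (hp : 1 < p) (hq : 1 < q)
    (hr : r = p * q / (p + q - 1)) (hq' : q' = q / (q - 1))
    (Δ : Set X) (hΔ : MeasurableSet Δ)
    (hω₀Δ : 0 < ω₀ Δ) (hω₀Δ' : ω₀ Δ < ⊤)
    (C₀ C₁ : ℝ) (hC₀ : 1 ≤ C₀)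
    (hRH₀ : ((σ Δ)⁻¹ * ∫⁻ x in Δ, ω₀.rnDeriv σ x ^ p ∂σ) ^ (1 / p) ≤
      ENNReal.ofReal C₀ * ω₀ Δ / σ Δ)
    (hRH₁ : ((ω₀ Δ)⁻¹ * ∫⁻ x in Δ, ω.rnDeriv ω₀ x ^ q ∂ω₀) ^ (1 / q) ≤
      ENNReal.ofReal C₁ * ω Δ / ω₀ Δ) :
    1 < r ∧ r < min p q ∧
      ((σ Δ)⁻¹ * ∫⁻ x in Δ, ω.rnDeriv σ x ^ r ∂σ) ^ (1 / r) ≤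
        ENNReal.ofReal (C₁ * C₀ ^ (1 / q')) * ω Δ / σ Δ := by
  obtain ⟨hr₁, hr_lt⟩ : 1 < r ∧ r < min p q := hr ▸ mul_div_add_sub_one_mem_Ioo hp hq
  refine ⟨hr₁, hr_lt, ?_⟩
  have hq₀ : 0 < q := by linarith
  have hrq : r ≤ q := (hr_lt.trans_le (min_le_right p q)).le
  have hpqr := mul_one_sub_div_of_eq_mul_div_add_sub_one hq₀.ne' (by linarith) hr
  have hC₀' : 0 ≤ C₀ := by linarith
  have hq'_inv : 1 / q' = 1 - 1 / q := by rw [hq']; field_simp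
  rw [hq'_inv, ENNReal.ofReal_mul' (Real.rpow_nonneg hC₀' _),
    ← ENNReal.ofReal_rpow_of_nonneg hC₀' (by rw [sub_nonneg, div_le_one hq₀]; exact hq.le),
    one_div, ENNReal.rpow_inv_le_iff (by linarith)]
  rw [one_div, ENNReal.rpow_inv_le_iff hq₀] at hRH₁
  rw [one_div, ENNReal.rpow_inv_le_iff (by linarith), mul_div_assoc] at hRH₀
  calc (σ Δ)⁻¹ * ∫⁻ x in Δ, ω.rnDeriv σ x ^ r ∂σ
      ≤ (ω₀ Δ / σ Δ * ((ω₀ Δ)⁻¹ * ∫⁻ x in Δ, ω.rnDeriv ω₀ x ^ q ∂ω₀)) ^ (r / q) *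
          ((σ Δ)⁻¹ * ∫⁻ x in Δ, ω₀.rnDeriv σ x ^ p ∂σ) ^ (1 - r / q) :=
        Measure.inv_mul_setLIntegral_rnDeriv_rpow_le hωω₀ hω₀σ hΔ hω₀Δ.ne' hω₀Δ'.ne
          (by linarith) hq₀ (by linarith) hrq hpqr
    _ ≤ (ω₀ Δ / σ Δ * (ENNReal.ofReal C₁ * ω Δ / ω₀ Δ) ^ q) ^ (r / q) *
          ((ENNReal.ofReal C₀ * (ω₀ Δ / σ Δ)) ^ p) ^ (1 - r / q) := by
        gcongr
        exact sub_nonneg.2 ((div_le_one hq₀).2 hrq)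
    _ = (ENNReal.ofReal C₁ * ω Δ / ω₀ Δ * (ω₀ Δ / σ Δ) * ENNReal.ofReal C₀ ^ (1 - 1 / q)) ^ r :=
        ENNReal.rpow_div_mul_rpow_one_sub_div_eq _ _ _ (by linarith) hq₀ (by linarith) hrq hpqr
    _ = (ENNReal.ofReal C₁ * ENNReal.ofReal C₀ ^ (1 - 1 / q) * ω Δ / σ Δ) ^ r := by
        rw [← mul_div_assoc, ENNReal.div_mul_cancel hω₀Δ.ne' hω₀Δ'.ne]
        congr 1
        simp only [div_eq_mul_inv]
        ring

/-- **Composition of reverse Hölder inequalities** (the measure-theoretic content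
of Lemma `lemma:weights` of the paper).  Let `σ, ω₀, ω` be σ-finite measures on a
measurable space with `ω ≪ ω₀ ≪ σ`.  Let `1 < p, q < ∞` and set
`r = pq/(p+q-1)`; then `1 < r < min{p,q}`.  If on a set `Δ` of finite positive
measure (for all three measures) the Radon–Nikodym derivatives satisfy
`(⨍_Δ (dω₀/dσ)^p dσ)^{1/p} ≤ C₀ ω₀(Δ)/σ(Δ)` and
`(⨍_Δ (dω/dω₀)^q dω₀)^{1/q} ≤ C₁ ω(Δ)/ω₀(Δ)`, then
`(⨍_Δ (dω/dσ)^r dσ)^{1/r} ≤ C₁ C₀^{1/q'} ω(Δ)/σ(Δ)`, where `q' = q/(q-1)`. -/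
theorem reverse_holder_composition {X : Type*} [MeasurableSpace X]
    (σ ω₀ ω : Measure X) [SigmaFinite σ] [SigmaFinite ω₀] [SigmaFinite ω]
    (hωω₀ : ω ≪ ω₀) (hω₀σ : ω₀ ≪ σ)
    (p q r q' : ℝ) (hp : 1 < p) (hq : 1 < q)
    (hr : r = p * q / (p + q - 1)) (hq' : q' = q / (q - 1))
    (Δ : Set X) (hΔ : MeasurableSet Δ)
    (hσΔ : 0 < σ Δ) (hσΔ' : σ Δ < ⊤)
    (hω₀Δ : 0 < ω₀ Δ) (hω₀Δ' : ω₀ Δ < ⊤)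
    (hωΔ : 0 < ω Δ) (hωΔ' : ω Δ < ⊤)
    (C₀ C₁ : ℝ) (hC₀ : 1 ≤ C₀) (hC₁ : 1 ≤ C₁)
    (hRH₀ : ((σ Δ)⁻¹ * ∫⁻ x in Δ, ω₀.rnDeriv σ x ^ p ∂σ) ^ (1 / p) ≤
      ENNReal.ofReal C₀ * ω₀ Δ / σ Δ)
    (hRH₁ : ((ω₀ Δ)⁻¹ * ∫⁻ x in Δ, ω.rnDeriv ω₀ x ^ q ∂ω₀) ^ (1 / q) ≤
      ENNReal.ofReal C₁ * ω Δ / ω₀ Δ) :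
    1 < r ∧ r < min p q ∧
      ((σ Δ)⁻¹ * ∫⁻ x in Δ, ω.rnDeriv σ x ^ r ∂σ) ^ (1 / r) ≤
        ENNReal.ofReal (C₁ * C₀ ^ (1 / q')) * ω Δ / σ Δ :=
  reverse_holder_composition_general σ ω₀ ω hωω₀ hω₀σ p q r q' hp hq hr hq' Δ hΔ hω₀Δ hω₀Δ' C₀ C₁
    hC₀ hRH₀ hRH₁
end
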